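/- arXiv:1102.4065 — 4 statements merged into one kernel-verified Lean document; each statement's English description precedes it below -/
import Mathlib

section
/- The set of conformal Killing vector fields of the flat metric η of signature (p,q) on ℝⁿ (n = p+q ≥ 3) that are polynomial forms a Lie algebra spanned by: the translations ∂_i, the linear conformal transformations (rotations x_j∂_i - x_i∂_j and the dilation x^i∂_i), and the inversions X_i = x_jx^j ∂_i - 2x_i x^j ∂_j; in particular each X_i = x_jx^j∂_i - 2x_ix^j∂_j is a conformal Killing field, i.e. the Lie derivative of η along X_i is a multiple of η. -/
open MvPolynomial

noncomputable section

/-- Polynomial symbols: polynomial functions on `T*ℝⁿ`; `Sum.inl` are the `x` variables,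
`Sum.inr` the fiber variables `p`. -/
abbrev PolySym (n : ℕ) := MvPolynomial (Fin n ⊕ Fin n) ℝ

/-- Polynomial functions on `ℝⁿ` (densities are identified with these). -/
abbrev PolyDen (n : ℕ) := MvPolynomial (Fin n) ℝ

/-- Polynomial vector fields on `ℝⁿ`, given by their components. -/
abbrev PolyVF (n : ℕ) := Fin n → PolyDen n

/-- `∂/∂x^i` on symbols. -/
def dxOp (n : ℕ) (i : Fin n) : Module.End ℝ (PolySym n) := (pderiv (Sum.inl i)).toLinearMap

/-- `∂/∂p_i` on symbols. -/
def dpOp (n : ℕ) (i : Fin n) : Module.End ℝ (PolySym n) := (pderiv (Sum.inr i)).toLinearMap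

/-- Multiplication by a symbol. -/
def mulOp (n : ℕ) (q : PolySym n) : Module.End ℝ (PolySym n) := LinearMap.mulLeft ℝ q

/-- The symbol `x^i`. -/
def xVar (n : ℕ) (i : Fin n) : PolySym n := X (Sum.inl i)

/-- The symbol `p_i`. -/
def pVar (n : ℕ) (i : Fin n) : PolySym n := X (Sum.inr i)

/-- A polynomial in `x` viewed as a symbol. -/
def liftX (n : ℕ) (f : PolyDen n) : PolySym n := rename Sum.inl f

/-- Divergence of a vector field. -/
def divVF (n : ℕ) (Xf : PolyVF n) : PolyDen n := ∑ i, pderiv i (Xf i)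

/-- Weight function computing the degree in the `p` variables. -/
def pwt (n : ℕ) : Fin n ⊕ Fin n → ℕ := Sum.elim (fun _ => 0) (fun _ => 1)

/-- Homogeneity of degree `k` in the fiber variables `p`. -/
def IsPHomog (n : ℕ) (P : PolySym n) (k : ℕ) : Prop := IsWeightedHomogeneous (pwt n) P k

/-- The weight-`δ` action `L^δ_X = X^i ∂_{x^i} - p_j (∂_{x^i} X^j) ∂_{p_i} + δ Div(X)` of a
vector field on symbols. -/
def Lop (n : ℕ) (δ : ℝ) (Xf : PolyVF n) : Module.End ℝ (PolySym n) :=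
  (∑ i, mulOp n (liftX n (Xf i)) ∘ₗ dxOp n i)
    - (∑ i, ∑ j, mulOp n (pVar n j * liftX n (pderiv i (Xf j))) ∘ₗ dpOp n i)
    + δ • mulOp n (liftX n (divVF n Xf))

/-- The action `ℓ^λ_X = X + λ Div(X)` of a vector field on `λ`-densities. -/
def ellOp (n : ℕ) (lam : ℝ) (Xf : PolyVF n) : Module.End ℝ (PolyDen n) :=
  (∑ i, LinearMap.mulLeft ℝ (Xf i) ∘ₗ (pderiv i).toLinearMap)
    + lam • LinearMap.mulLeft ℝ (divVF n Xf)

/-- Lie bracket of polynomial vector fields. -/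
def bracketVF (n : ℕ) (Xf Yf : PolyVF n) : PolyVF n :=
  fun i => ∑ j, (Xf j * pderiv j (Yf i) - Yf j * pderiv j (Xf i))
/-- The trace operator `T = η_{ij} ∂_{p_i} ∂_{p_j}` for the diagonal metric with entries `ε`. -/
def traceOp (n : ℕ) (ε : Fin n → ℝ) : Module.End ℝ (PolySym n) :=
  ∑ i, ε i • (dpOp n i ∘ₗ dpOp n i)

/-- The Euler operator `E = p_i ∂_{p_i}`. -/
def eulerOp (n : ℕ) : Module.End ℝ (PolySym n) := ∑ i, mulOp n (pVar n i) ∘ₗ dpOp n i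

/-- The quadratic symbol `R = η^{ij} p_i p_j` (the metric). -/
def rQuad (n : ℕ) (ε : Fin n → ℝ) : PolySym n := ∑ i, ε i • (pVar n i * pVar n i)

/-- Multiplication by the metric symbol `R`. -/
def rOp (n : ℕ) (ε : Fin n → ℝ) : Module.End ℝ (PolySym n) := mulOp n (rQuad n ε)

/-- The divergence operator `D = ∂_{x^i} ∂_{p_i}` on symbols. -/
def divOp (n : ℕ) : Module.End ℝ (PolySym n) := ∑ i, dxOp n i ∘ₗ dpOp n i

/-- The gradient operator `G = η^{ij} p_i ∂_{x^j}`. -/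
def gradOp (n : ℕ) (ε : Fin n → ℝ) : Module.End ℝ (PolySym n) :=
  ∑ i, ε i • (mulOp n (pVar n i) ∘ₗ dxOp n i)

/-- The translation vector field `∂_i`. -/
def transVF (n : ℕ) (i : Fin n) : PolyVF n := fun j => if j = i then 1 else 0

/-- The dilation vector field `x^i ∂_i`. -/
def dilVF (n : ℕ) : PolyVF n := fun j => X j

/-- The rotation vector field `x_j ∂_i - x_i ∂_j` for the diagonal metric `ε`. -/
def rotVF (n : ℕ) (ε : Fin n → ℝ) (i j : Fin n) : PolyVF n :=
  fun m => (if m = i then ε j • X j else 0) - (if m = j then ε i • X i else 0)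

/-- The conformal inversion `X_i = x_j x^j ∂_i - 2 x_i x^j ∂_j`. -/
def invVF (n : ℕ) (ε : Fin n → ℝ) (i : Fin n) : PolyVF n :=
  fun j => (if j = i then ∑ m, ε m • (X m * X m) else 0) - (2 * ε i) • (X i * X j)

/-- Generators of the conformal Lie algebra: translations, rotations, the dilation and the
conformal inversions. -/
def confGenSet (n : ℕ) (ε : Fin n → ℝ) : Set (PolyVF n) :=
  Set.range (transVF n) ∪ {Xf | ∃ i j, Xf = rotVF n ε i j} ∪ {dilVF n} ∪
    Set.range (invVF n ε)

/-- The Lie derivative of the flat diagonal metric `ε` along a polynomial vector field, at the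
indices `(i,j)`: `(L_X η)_{ij} = η_{mj} ∂_i X^m + η_{im} ∂_j X^m`. -/
def lieDerMetric (n : ℕ) (ε : Fin n → ℝ) (Xf : PolyVF n) (i j : Fin n) : PolyDen n :=
  ε j • pderiv i (Xf j) + ε i • pderiv j (Xf i)

/-- A polynomial vector field is conformal Killing if `L_X η = f · η` for some function `f`. -/
def IsConfKilling (n : ℕ) (ε : Fin n → ℝ) (Xf : PolyVF n) : Prop :=
  ∃ f : PolyDen n, ∀ i j, lieDerMetric n ε Xf i j = (if i = j then ε i else 0) • f

/-! Differentiating the conformal Killing equation `∂_i X_j + ∂_j X_i = f η_ij` and symmetrising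
gives `2 ∂_i ∂_j X_k = η_ki ∂_j f + η_kj ∂_i f - η_ij ∂_k f`. Computing a third derivative of `X_k`
in two orders then forces, once `n ≥ 3`, all second derivatives of `f` to vanish, so `f` is affine.
The inversion `X_i` has conformal factor `-4 x_i` and the dilation the factor `2`, so subtracting
suitable multiples of them leaves a Killing field. Its second derivatives vanish as well, so it is
affine with an `η`-antisymmetric linear part: a combination of translations and rotations.
The bracket of fields with factors `f` and `g` has factor `X(g) - Y(f)`. -/

namespace MvPolynomial

variable {σ R : Type*}

theorem pderiv_comm [CommSemiring R] (i j : σ) (p : MvPolynomial σ R) :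
    pderiv i (pderiv j p) = pderiv j (pderiv i p) := by
  classical
  induction p using MvPolynomial.induction_on with
  | C a => simp
  | add p q hp hq => simp [hp, hq]
  | mul_X p k hp =>
    simp only [pderiv_mul, map_add, hp, pderiv_X, Pi.single_apply,
      apply_ite (pderiv i), apply_ite (pderiv j), pderiv_one, map_zero, ite_self]
    ring

theorem pderiv_X_eq_ite [CommSemiring R] [DecidableEq σ] (i j : σ) :
    pderiv i (X j : MvPolynomial σ R) = if j = i then 1 else 0 := by
  rw [pderiv_X, Pi.single_apply]

variable [CommRing R] [IsAddTorsionFree R]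

theorem pderiv_ext {p q : MvPolynomial σ R} (hD : ∀ i, pderiv i p = pderiv i q)
    (hc : constantCoeff p = constantCoeff q) : p = q := by
  refine coe_injective σ R (MvPowerSeries.pderiv.ext (fun i => ?_) ?_)
  · simp only [MvPowerSeries.pderiv_coe, hD]
  · simpa [← MvPowerSeries.coeff_zero_eq_constantCoeff_apply, constantCoeff_eq] using hc

theorem eq_C_add_sum_of_pderiv_pderiv_eq_zero [Fintype σ] {p : MvPolynomial σ R}
    (h : ∀ i j, pderiv i (pderiv j p) = 0) :
    p = C (constantCoeff p) + ∑ j, constantCoeff (pderiv j p) • X j := by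
  classical
  have hD : ∀ i, pderiv i p = C (constantCoeff (pderiv i p)) := fun i =>
    pderiv_ext (fun j => by simp [h]) (by simp)
  refine pderiv_ext (fun i => ?_) (by simp)
  simp only [map_add, map_sum, Derivation.map_smul, pderiv_C, pderiv_X_eq_ite, smul_ite,
    smul_zero, Finset.sum_ite_eq', Finset.mem_univ, if_true, zero_add]
  rw [smul_eq_C_mul, mul_one]
  exact hD i

end MvPolynomial

theorem Fin.exists_ne_ne {n : ℕ} (h : 3 ≤ n) (a b : Fin n) : ∃ c, c ≠ a ∧ c ≠ b := by
  have : ({a, b} : Finset (Fin n)).card < (Finset.univ : Finset (Fin n)).card := by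
    rw [Finset.card_univ, Fintype.card_fin]
    exact Finset.card_le_two.trans_lt (by omega)
  obtain ⟨c, -, hc⟩ := Finset.exists_mem_notMem_of_card_lt_card this
  exact ⟨c, by simpa [not_or] using hc⟩

variable {n : ℕ} {ε : Fin n → ℝ}

def HasConfFactor (ε : Fin n → ℝ) (Xf : PolyVF n) (f : PolyDen n) : Prop :=
  ∀ i j, lieDerMetric n ε Xf i j = (if i = j then ε i else 0) • f

def confKillingPairs (ε : Fin n → ℝ) : Submodule ℝ (PolyVF n × PolyDen n) where
  carrier := {P | HasConfFactor ε P.1 P.2}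
  zero_mem' i j := by simp [lieDerMetric]
  add_mem' {P Q} hP hQ i j := by
    simp only [HasConfFactor, lieDerMetric] at *
    simp only [Prod.fst_add, Prod.snd_add, Pi.add_apply, map_add, smul_add, ← hP i j, ← hQ i j]
    abel
  smul_mem' c P hP i j := by
    simp only [HasConfFactor, lieDerMetric] at *
    simp only [Prod.smul_fst, Prod.smul_snd, Pi.smul_apply, Derivation.map_smul, smul_comm _ c,
      ← smul_add, hP i j]

theorem setOf_isConfKilling :
    {Xf : PolyVF n | IsConfKilling n ε Xf} = (confKillingPairs ε).map (LinearMap.fst ℝ _ _) := by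
  ext Xf
  exact ⟨fun ⟨f, hf⟩ => ⟨(Xf, f), hf, rfl⟩, fun ⟨⟨_, f⟩, hf, h⟩ => h ▸ ⟨f, hf⟩⟩

theorem hasConfFactor_transVF (i : Fin n) : HasConfFactor ε (transVF n i) 0 := by
  intro a b
  simp [lieDerMetric, transVF, apply_ite (pderiv a), apply_ite (pderiv b)]

theorem hasConfFactor_dilVF : HasConfFactor ε (dilVF n) 2 := by
  intro a b
  by_cases h : a = b
  · subst h
    simp [lieDerMetric, dilVF, ← smul_add, one_add_one_eq_two]
  · simp [lieDerMetric, dilVF, h, Ne.symm h]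

theorem hasConfFactor_rotVF (i j : Fin n) : HasConfFactor ε (rotVF n ε i j) 0 := by
  intro a b
  simp only [lieDerMetric, rotVF, map_sub, apply_ite (pderiv a), apply_ite (pderiv b),
    Derivation.map_smul, pderiv_X_eq_ite, map_zero]
  split_ifs <;> subst_vars <;> simp_all [smul_eq_C_mul] <;> ring

theorem pderiv_sum_smul_X_mul_X (c : Fin n → ℝ) (l : Fin n) :
    pderiv l (∑ m, c m • (X m * X m) : PolyDen n) = (2 * c l) • X l := by
  simp [Derivation.map_smul, pderiv_X_eq_ite, -pderiv_X, two_mul, add_smul,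
    Finset.sum_add_distrib]

theorem hasConfFactor_invVF (i : Fin n) :
    HasConfFactor ε (invVF n ε i) ((-4 * ε i) • X i) := by
  intro a b
  simp only [lieDerMetric, invVF, map_sub, apply_ite (pderiv a), apply_ite (pderiv b),
    Derivation.map_smul, pderiv_mul, pderiv_X_eq_ite, pderiv_sum_smul_X_mul_X, map_zero]
  split_ifs <;> subst_vars <;> simp_all [smul_eq_C_mul, map_ofNat] <;> ring

theorem lieDerMetric_bracketVF (Xf Yf : PolyVF n) (a b : Fin n) :
    lieDerMetric n ε (bracketVF n Xf Yf) a b = ∑ j,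
      (Xf j * pderiv j (lieDerMetric n ε Yf a b) - Yf j * pderiv j (lieDerMetric n ε Xf a b)
        + pderiv a (Xf j) * lieDerMetric n ε Yf j b - pderiv a (Yf j) * lieDerMetric n ε Xf j b
        + pderiv b (Xf j) * lieDerMetric n ε Yf j a
        - pderiv b (Yf j) * lieDerMetric n ε Xf j a) := by
  simp only [lieDerMetric, bracketVF, map_sum, Finset.smul_sum, ← Finset.sum_add_distrib]
  refine Finset.sum_congr rfl fun j _ => ?_
  simp only [map_add, map_sub, pderiv_mul, pderiv_C, pderiv_comm j a, pderiv_comm j b,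
    smul_eq_C_mul]
  ring

theorem HasConfFactor.bracketVF {Xf Yf : PolyVF n} {f g : PolyDen n}
    (hX : HasConfFactor ε Xf f) (hY : HasConfFactor ε Yf g) :
    HasConfFactor ε (bracketVF n Xf Yf) (∑ j, (Xf j * pderiv j g - Yf j * pderiv j f)) := by
  intro a b
  rw [lieDerMetric_bracketVF]
  have hXab := hX a b
  have hYab := hY a b
  simp only [lieDerMetric] at hXab hYab
  simp only [hX _ _, hY _ _, ite_smul, zero_smul, mul_ite, mul_zero, Finset.sum_add_distrib,
    Finset.sum_sub_distrib, Finset.sum_ite_eq', Finset.mem_univ, if_true]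
  split_ifs at hXab hYab ⊢ with hab
  · subst hab
    simp only [Derivation.map_smul, mul_smul_comm, ← Finset.smul_sum]
    simp only [smul_eq_C_mul] at hXab hYab ⊢
    linear_combination g * hXab - f * hYab
  · simp only [map_zero, mul_zero, Finset.sum_const_zero, sub_zero, zero_smul, smul_eq_C_mul]
      at hXab hYab ⊢
    linear_combination g * hXab - f * hYab

theorem sum_smul_transVF_apply (t : Fin n → ℝ) (k : Fin n) :
    (∑ m, t m • transVF n m) k = C (t k) := by
  simp [transVF, Finset.sum_apply, smul_eq_C_mul]

theorem sum_sum_smul_rotVF_apply (r : Fin n → Fin n → ℝ) (k : Fin n) :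
    (∑ i, ∑ j, r i j • rotVF n ε i j) k = ∑ l, ((r k l - r l k) * ε l) • X l := by
  simp [rotVF, Finset.sum_apply, smul_sub, Finset.sum_sub_distrib, smul_smul, sub_mul, sub_smul]

section Classification

variable {Xf : PolyVF n} {f : PolyDen n}

theorem HasConfFactor.smul_pderiv_pderiv (hX : HasConfFactor ε Xf f) (i j k : Fin n) :
    (2 * ε k) • pderiv i (pderiv j (Xf k)) =
      (if k = i then ε k else 0) • pderiv j f + (if k = j then ε k else 0) • pderiv i f
        - (if i = j then ε i else 0) • pderiv k f := by
  have hd : ∀ l a b, ε b • pderiv l (pderiv a (Xf b)) + ε a • pderiv l (pderiv b (Xf a))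
      = (if a = b then ε a else 0) • pderiv l f := fun l a b => by
    simpa only [lieDerMetric, map_add, Derivation.map_smul] using congrArg (pderiv l) (hX a b)
  have h1 := hd j k i
  have h2 := hd i k j
  have h3 := hd k i j
  rw [pderiv_comm j k (Xf i), pderiv_comm j i (Xf k)] at h1
  rw [pderiv_comm i k (Xf j)] at h2
  simp only [smul_eq_C_mul, map_mul, map_ofNat] at h1 h2 h3 ⊢
  linear_combination h1 + h2 - h3

theorem HasConfFactor.pderiv_pderiv_factor_relation (hX : HasConfFactor ε Xf f)
    (i j k l : Fin n) :
    (if k = i then ε k else 0) • pderiv l (pderiv j f)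
      - (if i = j then ε i else 0) • pderiv l (pderiv k f)
    = (if k = l then ε k else 0) • pderiv i (pderiv j f)
      - (if l = j then ε l else 0) • pderiv i (pderiv k f) := by
  have h1 := congrArg (pderiv l) (hX.smul_pderiv_pderiv i j k)
  have h2 := congrArg (pderiv i) (hX.smul_pderiv_pderiv l j k)
  simp only [map_add, map_sub, Derivation.map_smul] at h1 h2
  rw [pderiv_comm l i (pderiv j (Xf k))] at h1
  rw [pderiv_comm i l f] at h2
  simp only [smul_eq_C_mul] at h1 h2 ⊢
  linear_combination h2 - h1

theorem HasConfFactor.pderiv_pderiv_factor_eq_zero (h3 : 3 ≤ n) (hε : ∀ i, ε i ≠ 0)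
    (hX : HasConfFactor ε Xf f) (a b : Fin n) : pderiv a (pderiv b f) = 0 := by
  rcases eq_or_ne a b with rfl | hab
  · -- `ε_x⁻¹ ∂_x² f` changes sign under each transposition of two indices; a 3-cycle kills it.
    have hswap : ∀ x y, x ≠ y →
        C (ε y) * pderiv x (pderiv x f) = -(C (ε x) * pderiv y (pderiv y f)) := by
      intro x y hxy
      simpa [hxy, hxy.symm, smul_eq_C_mul] using hX.pderiv_pderiv_factor_relation y x y x
    obtain ⟨c, hca, -⟩ := Fin.exists_ne_ne h3 a a
    obtain ⟨e, hea, hec⟩ := Fin.exists_ne_ne h3 a c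
    have h : (C (2 * ε c * ε e) : PolyDen n) * pderiv a (pderiv a f) = 0 := by
      rw [map_mul, map_mul, map_ofNat]
      linear_combination C (ε e) * hswap a c hca.symm - C (ε a) * hswap c e hec.symm
        + C (ε c) * hswap e a hea
    simpa [hε c, hε e] using h
  · obtain ⟨c, hca, hcb⟩ := Fin.exists_ne_ne h3 a b
    have h := hX.pderiv_pderiv_factor_relation c b c a
    simp only [if_neg hca, if_neg hcb, if_neg hab, zero_smul, sub_zero] at h
    exact (smul_eq_zero.mp h).resolve_left (hε c)

theorem HasConfFactor.mem_span_of_factor_eq_zero (hε : ∀ i, ε i ≠ 0)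
    (hX : HasConfFactor ε Xf 0) : Xf ∈ Submodule.span ℝ (confGenSet n ε) := by
  have hX2 : ∀ k i j, pderiv i (pderiv j (Xf k)) = 0 := fun k i j => by
    have h := hX.smul_pderiv_pderiv i j k
    simp only [map_zero, smul_zero, add_zero, sub_zero] at h
    exact (smul_eq_zero.mp h).resolve_left (mul_ne_zero two_ne_zero (hε k))
  set K : Fin n → Fin n → ℝ := fun l k => constantCoeff (pderiv l (Xf k))
  have hK : ∀ l k, ε k * K l k + ε l * K k l = 0 := fun l k => by
    simpa [lieDerMetric, smul_eq_C_mul] using congrArg constantCoeff (hX l k)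
  suffices hXeq : Xf = ∑ k, constantCoeff (Xf k) • transVF n k
      + ∑ i, ∑ j, (K j i / (2 * ε j)) • rotVF n ε i j by
    rw [hXeq]
    refine add_mem (sum_mem fun k _ => Submodule.smul_mem _ _ (Submodule.subset_span ?_))
      (sum_mem fun i _ => sum_mem fun j _ => Submodule.smul_mem _ _ (Submodule.subset_span ?_))
    · simp [confGenSet]
    · simp [confGenSet]
  funext k
  rw [Pi.add_apply, sum_smul_transVF_apply, sum_sum_smul_rotVF_apply]
  conv_lhs => rw [eq_C_add_sum_of_pderiv_pderiv_eq_zero (hX2 k)]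
  refine congrArg _ (Finset.sum_congr rfl fun l _ => congrArg (· • X l) ?_)
  field_simp [hε k, hε l]
  linear_combination hK l k

theorem HasConfFactor.mem_span (h3 : 3 ≤ n) (hε : ∀ i, ε i ≠ 0) (hX : HasConfFactor ε Xf f) :
    Xf ∈ Submodule.span ℝ (confGenSet n ε) := by
  have hf := eq_C_add_sum_of_pderiv_pderiv_eq_zero (hX.pderiv_pderiv_factor_eq_zero h3 hε)
  set f₀ := constantCoeff f
  set c : Fin n → ℝ := fun i => constantCoeff (pderiv i f) / (4 * ε i)
  set Zf := Xf + ∑ i, c i • invVF n ε i - (f₀ / 2) • dilVF n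
  have hZ : ((Zf, 0) : PolyVF n × PolyDen n) ∈ confKillingPairs ε := by
    have hP : (Xf, f) + ∑ i, c i • (invVF n ε i, (-4 * ε i) • X i)
        - (f₀ / 2) • (dilVF n, 2) ∈ confKillingPairs ε :=
      sub_mem (add_mem hX (sum_mem fun i _ => Submodule.smul_mem _ _ (hasConfFactor_invVF i)))
        (Submodule.smul_mem _ _ hasConfFactor_dilVF)
    convert hP using 1
    ext1
    · simp [Zf, Prod.fst_sum]
    · have hc : ∀ i, c i • (4 * ε i) • (X i : PolyDen n) = constantCoeff (pderiv i f) • X i :=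
        fun i => by rw [smul_smul, div_mul_cancel₀ _ (mul_ne_zero four_ne_zero (hε i))]
      have h2 : (f₀ / 2) • (2 : PolyDen n) = C f₀ := by
        rw [smul_eq_C_mul, ← map_ofNat C 2, ← map_mul, div_mul_cancel₀ _ two_ne_zero]
      simp only [Prod.snd_sub, Prod.snd_add, Prod.snd_sum, Prod.smul_snd, neg_mul, neg_smul,
        smul_neg, Finset.sum_neg_distrib, hc, h2]
      linear_combination -hf
  have hXZ : Xf = Zf - ∑ i, c i • invVF n ε i + (f₀ / 2) • dilVF n := by
    simp only [Zf]
    abel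
  rw [hXZ]
  refine add_mem (sub_mem (HasConfFactor.mem_span_of_factor_eq_zero hε hZ)
    (sum_mem fun i _ => Submodule.smul_mem _ _ (Submodule.subset_span ?_)))
    (Submodule.smul_mem _ _ (Submodule.subset_span ?_))
  · simp [confGenSet]
  · simp [confGenSet]

end Classification

theorem conformal_killing_fields_classification_general (p n : ℕ) (h3 : 3 ≤ n)
    (ε : Fin n → ℝ) (hε : ∀ i, ε i = if (i : ℕ) < p then 1 else -1) :
    (∀ i, IsConfKilling n ε (invVF n ε i)) ∧
    {Xf : PolyVF n | IsConfKilling n ε Xf}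
      = ↑(Submodule.span ℝ (confGenSet n ε)) ∧
    (∀ Xf Yf : PolyVF n, IsConfKilling n ε Xf → IsConfKilling n ε Yf →
      IsConfKilling n ε (bracketVF n Xf Yf)) := by
  have hε₀ : ∀ i, ε i ≠ 0 := fun i => by rw [hε i]; split_ifs <;> norm_num
  refine ⟨fun i => ⟨_, hasConfFactor_invVF i⟩, ?_,
    fun Xf Yf ⟨f, hf⟩ ⟨g, hg⟩ => ⟨_, HasConfFactor.bracketVF hf hg⟩⟩
  rw [setOf_isConfKilling]
  congr 1
  refine le_antisymm ?_ (Submodule.span_le.mpr ?_)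
  · rintro _ ⟨⟨Xf, f⟩, hX, rfl⟩
    exact HasConfFactor.mem_span h3 hε₀ hX
  · rintro _ (((⟨i, rfl⟩ | ⟨i, j, rfl⟩) | rfl) | ⟨i, rfl⟩)
    · exact ⟨(_, _), hasConfFactor_transVF i, rfl⟩
    · exact ⟨(_, _), hasConfFactor_rotVF i j, rfl⟩
    · exact ⟨(_, _), hasConfFactor_dilVF, rfl⟩
    · exact ⟨(_, _), hasConfFactor_invVF i, rfl⟩

/-- For the flat metric of signature `(p,q)` on `ℝⁿ`, `n = p + q ≥ 3`: each
inversion `X_i = x_jx^j∂_i - 2x_ix^j∂_j` is conformal Killing; the set of polynomial conformal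
Killing fields is exactly the linear span of the translations, rotations, dilation and
inversions; and this set is closed under the Lie bracket, hence is a Lie algebra. -/
theorem conformal_killing_fields_classification (p q n : ℕ) (hn : n = p + q) (h3 : 3 ≤ n)
    (ε : Fin n → ℝ) (hε : ∀ i, ε i = if (i : ℕ) < p then 1 else -1) :
    (∀ i, IsConfKilling n ε (invVF n ε i)) ∧
    {Xf : PolyVF n | IsConfKilling n ε Xf}
      = ↑(Submodule.span ℝ (confGenSet n ε)) ∧
    (∀ Xf Yf : PolyVF n, IsConfKilling n ε Xf → IsConfKilling n ε Yf →
      IsConfKilling n ε (bracketVF n Xf Yf)) :=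
  conformal_killing_fields_classification_general p n h3 ε hε
end
end

section
/- On symbols homogeneous of degree k in p, the commutator of the m-th power of the divergence operator D = ∂_{x^i}∂_{p_i} with the projective action L^δ of the inversion X^i = x^i x^j∂_j satisfies [D^m, L^δ_{X^i}] = d^k_m(δ)·∂_{p_i}·D^{m-1}, where d^k_m(δ) = m(-2k + m + 1 + (δ-1)(n+1)). -/
open MvPolynomial

noncomputable section

/-- The projective inversion `X^i = x^i x^j ∂_j`. -/
def projVF (n : ℕ) (i : Fin n) : PolyVF n := fun j => X i * X j

/-- Generators of the projective algebra `sl_{n+1}`: affine vector fields together with the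
projective inversions. -/
def projGenSet (n : ℕ) : Set (PolyVF n) :=
  {Xf | ∀ i, (Xf i).totalDegree ≤ 1} ∪ Set.range (projVF n)
variable {n : ℕ}

lemma pderivX (u v : Fin n ⊕ Fin n) : pderiv u (X v : PolySym n) = if v = u then 1 else 0 := by
  rcases eq_or_ne v u with h | h
  · subst h; simp [pderiv_X_self]
  · simp [pderiv_X_of_ne h, h]

lemma mulOp_apply (q P : PolySym n) : mulOp n q P = q * P := rfl
lemma dxOp_apply (a : Fin n) (P : PolySym n) : dxOp n a P = pderiv (Sum.inl a) P := rfl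
lemma dpOp_apply (a : Fin n) (P : PolySym n) : dpOp n a P = pderiv (Sum.inr a) P := rfl

lemma pderiv_comm' (u v : Fin n ⊕ Fin n) (P : PolySym n) :
    pderiv u (pderiv v P) = pderiv v (pderiv u P) := by
  induction P using MvPolynomial.induction_on with
  | C a => simp
  | add p q hp hq => simp [hp, hq]
  | mul_X p s hp => simp [pderiv_mul, pderivX, hp, Pi.single_apply, mul_ite, apply_ite (pderiv u), apply_ite (pderiv v)]; ring

lemma dxOp_mulOp (a : Fin n) (q : PolySym n) :
    dxOp n a * mulOp n q = mulOp n (pderiv (Sum.inl a) q) + mulOp n q * dxOp n a := by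
  apply LinearMap.ext; intro P
  simp [dxOp, mulOp, pderiv_mul, Module.End.mul_apply]; ring

lemma dpOp_mulOp (a : Fin n) (q : PolySym n) :
    dpOp n a * mulOp n q = mulOp n (pderiv (Sum.inr a) q) + mulOp n q * dpOp n a := by
  apply LinearMap.ext; intro P
  simp [dpOp, mulOp, pderiv_mul, Module.End.mul_apply]; ring

lemma dxOp_dpOp (a b : Fin n) : dxOp n a * dpOp n b = dpOp n b * dxOp n a := by
  apply LinearMap.ext; intro P
  simp [dxOp, dpOp, Module.End.mul_apply, pderiv_comm']

lemma mulOp_mul (q r : PolySym n) : mulOp n (q * r) = mulOp n q * mulOp n r := by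
  apply LinearMap.ext; intro P
  simp [mulOp, Module.End.mul_apply, mul_assoc]

lemma mulOp_comm (q r : PolySym n) : mulOp n q * mulOp n r = mulOp n r * mulOp n q := by
  rw [← mulOp_mul, ← mulOp_mul, mul_comm]

lemma mulOp_one : mulOp n 1 = 1 := by
  apply LinearMap.ext; intro P; simp [mulOp]

lemma mulOp_zero : mulOp n 0 = 0 := by
  apply LinearMap.ext; intro P; simp [mulOp]

lemma dxOp_mulX (b a : Fin n) :
    dxOp n b * mulOp n (xVar n a) = mulOp n (xVar n a) * dxOp n b + (if a = b then 1 else 0) := by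
  rw [dxOp_mulOp, xVar, pderivX]
  rcases eq_or_ne a b with h | h
  · subst h; simp [mulOp_one, add_comm]
  · simp [h, mulOp_zero]

lemma dpOp_mulX (b a : Fin n) :
    dpOp n b * mulOp n (xVar n a) = mulOp n (xVar n a) * dpOp n b := by
  rw [dpOp_mulOp, xVar, pderivX]; simp [mulOp_zero]

lemma dxOp_mulP (b a : Fin n) :
    dxOp n b * mulOp n (pVar n a) = mulOp n (pVar n a) * dxOp n b := by
  rw [dxOp_mulOp, pVar, pderivX]; simp [mulOp_zero]

lemma dpOp_mulP (b a : Fin n) :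
    dpOp n b * mulOp n (pVar n a) = mulOp n (pVar n a) * dpOp n b + (if a = b then 1 else 0) := by
  rw [dpOp_mulOp, pVar, pderivX]
  rcases eq_or_ne a b with h | h
  · subst h; simp [mulOp_one, add_comm]
  · simp [h, mulOp_zero]

lemma dxOp_dxOp (a b : Fin n) : dxOp n a * dxOp n b = dxOp n b * dxOp n a := by
  apply LinearMap.ext; intro P
  simp [dxOp, Module.End.mul_apply, pderiv_comm']

lemma dpOp_dpOp (a b : Fin n) : dpOp n a * dpOp n b = dpOp n b * dpOp n a := by
  apply LinearMap.ext; intro P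
  simp [dpOp, Module.End.mul_apply, pderiv_comm']

/-- Euler operator in the `p` variables. -/
def EpOp (n : ℕ) : Module.End ℝ (PolySym n) := ∑ j, mulOp n (pVar n j) * dpOp n j

/-- Euler operator in the `x` variables. -/
def ExOp (n : ℕ) : Module.End ℝ (PolySym n) := ∑ j, mulOp n (xVar n j) * dxOp n j

/-- Multiplication by `∑ p_j x^j`. -/
def RrOp (n : ℕ) : Module.End ℝ (PolySym n) := ∑ j, mulOp n (pVar n j) * mulOp n (xVar n j)

lemma divOp_eq : divOp n = ∑ b, dxOp n b * dpOp n b := rfl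

lemma divOp_comm_mulX (a : Fin n) :
    divOp n * mulOp n (xVar n a) = mulOp n (xVar n a) * divOp n + dpOp n a := by
  rw [divOp_eq, Finset.sum_mul, Finset.mul_sum]
  have key : ∀ b : Fin n, dxOp n b * dpOp n b * mulOp n (xVar n a)
      = mulOp n (xVar n a) * (dxOp n b * dpOp n b) + (if a = b then dpOp n b else 0) := by
    intro b
    rw [mul_assoc, dpOp_mulX, ← mul_assoc, dxOp_mulX, add_mul, mul_assoc]
    rcases eq_or_ne a b with h | h <;> simp [h]
  simp only [key]
  rw [Finset.sum_add_distrib]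
  simp [Finset.sum_ite_eq]

lemma divOp_comm_Ex : divOp n * ExOp n = ExOp n * divOp n + divOp n := by
  rw [divOp_eq, ExOp, Finset.sum_mul_sum]
  have key : ∀ b j : Fin n, (dxOp n b * dpOp n b) * (mulOp n (xVar n j) * dxOp n j)
      = (mulOp n (xVar n j) * dxOp n j) * (dxOp n b * dpOp n b)
        + (if j = b then dxOp n b * dpOp n b else 0) := by
    intro b j
    calc (dxOp n b * dpOp n b) * (mulOp n (xVar n j) * dxOp n j)
        = dxOp n b * (dpOp n b * mulOp n (xVar n j)) * dxOp n j := by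
          rw [mul_assoc, mul_assoc, mul_assoc]
      _ = (dxOp n b * mulOp n (xVar n j)) * (dpOp n b * dxOp n j) := by
          rw [dpOp_mulX]; rw [mul_assoc, mul_assoc, mul_assoc]
      _ = (mulOp n (xVar n j) * dxOp n b + (if j = b then 1 else 0)) * (dxOp n j * dpOp n b) := by
          rw [dxOp_mulX, ← dxOp_dpOp]
      _ = (mulOp n (xVar n j) * dxOp n j) * (dxOp n b * dpOp n b)
            + (if j = b then dxOp n b * dpOp n b else 0) := by
          have hcomm : mulOp n (xVar n j) * dxOp n b * (dxOp n j * dpOp n b)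
              = mulOp n (xVar n j) * dxOp n j * (dxOp n b * dpOp n b) := by
            rw [mul_assoc, mul_assoc, ← mul_assoc (dxOp n b), dxOp_dxOp, mul_assoc]
          rcases eq_or_ne j b with h | h
          · subst h; rw [add_mul, hcomm]; simp
          · rw [add_mul, hcomm]; simp [h]
  simp only [key]
  rw [Finset.sum_comm]
  simp only [Finset.sum_add_distrib]
  congr 1
  · simp only [ExOp, divOp_eq, Finset.sum_mul_sum]
  · simp [Finset.sum_ite_eq, divOp_eq]

lemma divOp_comm_Ep : divOp n * EpOp n = EpOp n * divOp n + divOp n := by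
  rw [divOp_eq, EpOp, Finset.sum_mul_sum]
  have key : ∀ b j : Fin n, (dxOp n b * dpOp n b) * (mulOp n (pVar n j) * dpOp n j)
      = (mulOp n (pVar n j) * dpOp n j) * (dxOp n b * dpOp n b)
        + (if j = b then dxOp n b * dpOp n b else 0) := by
    intro b j
    have hcomm : mulOp n (pVar n j) * dxOp n b * (dpOp n b * dpOp n j)
        = mulOp n (pVar n j) * dpOp n j * (dxOp n b * dpOp n b) := by
      rw [mul_assoc, mul_assoc, dpOp_dpOp, ← mul_assoc (dxOp n b), dxOp_dpOp, mul_assoc]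
    calc (dxOp n b * dpOp n b) * (mulOp n (pVar n j) * dpOp n j)
        = dxOp n b * (dpOp n b * mulOp n (pVar n j)) * dpOp n j := by
          rw [mul_assoc, mul_assoc, mul_assoc]
      _ = dxOp n b * (mulOp n (pVar n j) * dpOp n b + (if j = b then 1 else 0)) * dpOp n j := by
          rw [dpOp_mulP]
      _ = (dxOp n b * mulOp n (pVar n j)) * (dpOp n b * dpOp n j)
            + (if j = b then dxOp n b * dpOp n j else 0) := by
          rcases eq_or_ne j b with h | h <;>
            simp [h, mul_add, add_mul, mul_assoc]
      _ = (mulOp n (pVar n j) * dpOp n j) * (dxOp n b * dpOp n b)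
            + (if j = b then dxOp n b * dpOp n b else 0) := by
          rw [dxOp_mulP, hcomm]
          rcases eq_or_ne j b with h | h
          · subst h; simp
          · simp [h]
  simp only [key]
  rw [Finset.sum_comm]
  simp only [Finset.sum_add_distrib]
  congr 1
  · simp only [EpOp, divOp_eq, Finset.sum_mul_sum]
  · simp [Finset.sum_ite_eq, divOp_eq]

lemma divOp_comm_Rr :
    divOp n * RrOp n = RrOp n * divOp n + ExOp n + EpOp n + (n : ℝ) • 1 := by
  conv_lhs => rw [divOp_eq, RrOp, Finset.sum_mul_sum]
  have key : ∀ b j : Fin n, (dxOp n b * dpOp n b) * (mulOp n (pVar n j) * mulOp n (xVar n j))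
      = (mulOp n (pVar n j) * mulOp n (xVar n j)) * (dxOp n b * dpOp n b)
        + (if j = b then mulOp n (xVar n j) * dxOp n j + mulOp n (pVar n j) * dpOp n j + 1
           else 0) := by
    intro b j
    calc (dxOp n b * dpOp n b) * (mulOp n (pVar n j) * mulOp n (xVar n j))
        = dxOp n b * (dpOp n b * mulOp n (pVar n j)) * mulOp n (xVar n j) := by
          rw [mul_assoc, mul_assoc, mul_assoc]
      _ = dxOp n b * (mulOp n (pVar n j) * dpOp n b + (if j = b then 1 else 0))
            * mulOp n (xVar n j) := by rw [dpOp_mulP]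
      _ = (dxOp n b * mulOp n (pVar n j)) * (dpOp n b * mulOp n (xVar n j))
            + (if j = b then dxOp n b * mulOp n (xVar n j) else 0) := by
          rcases eq_or_ne j b with h | h <;> simp [h, mul_add, add_mul, mul_assoc]
      _ = (mulOp n (pVar n j) * (dxOp n b * mulOp n (xVar n j))) * dpOp n b
            + (if j = b then dxOp n b * mulOp n (xVar n j) else 0) := by
          rw [dxOp_mulP, dpOp_mulX]; rw [mul_assoc, mul_assoc, mul_assoc]
      _ = (mulOp n (pVar n j) * (mulOp n (xVar n j) * dxOp n b + (if j = b then 1 else 0)))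
            * dpOp n b
            + (if j = b then mulOp n (xVar n j) * dxOp n b + (if j = b then 1 else 0) else 0) := by
          rw [dxOp_mulX]
      _ = (mulOp n (pVar n j) * mulOp n (xVar n j)) * (dxOp n b * dpOp n b)
            + (if j = b then mulOp n (xVar n j) * dxOp n j + mulOp n (pVar n j) * dpOp n j + 1
               else 0) := by
          rcases eq_or_ne j b with h | h
          · subst h; simp [mul_add, add_mul, mul_assoc]; abel
          · simp [h, mul_add, add_mul, mul_assoc]
  simp only [key]
  rw [Finset.sum_comm]
  simp only [Finset.sum_add_distrib]
  have h1 : ∑ j : Fin n, ∑ b : Fin n, (mulOp n (pVar n j) * mulOp n (xVar n j))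
      * (dxOp n b * dpOp n b) = RrOp n * divOp n := by
    rw [RrOp, divOp_eq, Finset.sum_mul_sum]
  have h2 : ∑ j : Fin n, ∑ b : Fin n,
      (if j = b then mulOp n (xVar n j) * dxOp n j + mulOp n (pVar n j) * dpOp n j + 1
       else (0 : Module.End ℝ (PolySym n)))
      = ExOp n + EpOp n + (n : ℝ) • 1 := by
    simp [Finset.sum_ite_eq, Finset.sum_add_distrib, ExOp, EpOp, Nat.cast_smul_eq_nsmul]
  rw [h1, h2]
  abel

lemma dpOp_comm_Ex (a : Fin n) : dpOp n a * ExOp n = ExOp n * dpOp n a := by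
  rw [ExOp, Finset.mul_sum, Finset.sum_mul]
  refine Finset.sum_congr rfl fun j _ => ?_
  rw [← mul_assoc, dpOp_mulX, mul_assoc, ← dxOp_dpOp, ← mul_assoc]

lemma dpOp_comm_Ep (a : Fin n) : dpOp n a * EpOp n = EpOp n * dpOp n a + dpOp n a := by
  rw [EpOp, Finset.mul_sum, Finset.sum_mul]
  have key : ∀ j : Fin n, dpOp n a * (mulOp n (pVar n j) * dpOp n j)
      = (mulOp n (pVar n j) * dpOp n j) * dpOp n a + (if j = a then dpOp n j else 0) := by
    intro j
    rw [← mul_assoc, dpOp_mulP, add_mul, mul_assoc, dpOp_dpOp, ← mul_assoc]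
    rcases eq_or_ne j a with h | h <;> simp [h]
  simp only [key]
  rw [Finset.sum_add_distrib]
  simp [Finset.sum_ite_eq]

lemma divOp_comm_dp (a : Fin n) : divOp n * dpOp n a = dpOp n a * divOp n := by
  rw [divOp_eq, Finset.sum_mul, Finset.mul_sum]
  refine Finset.sum_congr rfl fun b _ => ?_
  rw [mul_assoc, dpOp_dpOp, ← mul_assoc, dxOp_dpOp, mul_assoc]

lemma pderivX' {σ : Type*} [DecidableEq σ] (u v : σ) :
    pderiv u (X v : MvPolynomial σ ℝ) = if v = u then 1 else 0 := by
  rcases eq_or_ne v u with h | h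
  · subst h; simp [pderiv_X_self]
  · simp [pderiv_X_of_ne h, h]

lemma mulOp_add (q r : PolySym n) : mulOp n (q + r) = mulOp n q + mulOp n r := by
  apply LinearMap.ext; intro P; simp [mulOp, add_mul]

lemma mulOp_nsmul (m : ℕ) (q : PolySym n) : mulOp n (m • q) = m • mulOp n q := by
  apply LinearMap.ext; intro P; simp [mulOp, mul_assoc]

lemma Lop_proj_eq (δ : ℝ) (i : Fin n) :
    Lop n δ (projVF n i)
      = mulOp n (xVar n i) * ExOp n - RrOp n * dpOp n i - mulOp n (xVar n i) * EpOp n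
        + (δ * ((n : ℝ) + 1)) • mulOp n (xVar n i) := by
  have hT1 : (∑ a, mulOp n (liftX n (projVF n i a)) ∘ₗ dxOp n a)
      = mulOp n (xVar n i) * ExOp n := by
    rw [ExOp, Finset.mul_sum]
    refine Finset.sum_congr rfl fun a _ => ?_
    rw [← Module.End.mul_eq_comp]
    simp only [projVF, liftX, map_mul, rename_X]
    rw [← xVar, ← xVar, mulOp_mul, mul_assoc]
  have inner : ∀ a j : Fin n,
      mulOp n (pVar n j * liftX n (pderiv a (projVF n i j))) ∘ₗ dpOp n a
      = (if i = a then mulOp n (pVar n j) * mulOp n (xVar n j) * dpOp n a else 0)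
        + (if j = a then mulOp n (pVar n j) * mulOp n (xVar n i) * dpOp n a else 0) := by
    intro a j
    rw [← Module.End.mul_eq_comp]
    simp only [projVF, pderiv_mul, pderivX']
    rcases eq_or_ne i a with hia | hia <;> rcases eq_or_ne j a with hja | hja <;>
      simp [hia, hja, liftX, xVar, pVar, mulOp_mul, mulOp_add, mulOp_zero, mul_add,
        add_mul, mul_assoc]
  have hT2 : (∑ a, ∑ j, mulOp n (pVar n j * liftX n (pderiv a (projVF n i j))) ∘ₗ dpOp n a)
      = RrOp n * dpOp n i + mulOp n (xVar n i) * EpOp n := by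
    simp only [inner, Finset.sum_add_distrib]
    congr 1
    · rw [Finset.sum_comm, RrOp, Finset.sum_mul]
      refine Finset.sum_congr rfl fun j _ => ?_
      rw [Finset.sum_ite_eq]
      simp
    · rw [EpOp, Finset.mul_sum]
      refine Finset.sum_congr rfl fun a _ => ?_
      rw [Finset.sum_ite_eq']
      simp [mulOp_comm (pVar n a) (xVar n i), mul_assoc]
  have hdiv : divVF n (projVF n i) = ((n : ℕ) + 1) • X i := by
    simp only [divVF, projVF, pderiv_mul, pderivX', Finset.sum_add_distrib, ite_mul, one_mul,
      zero_mul, Finset.sum_ite_eq, Finset.mem_univ, if_true, pderiv_X_self, mul_one,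
      Finset.sum_const, Finset.card_univ, Fintype.card_fin]
    rw [add_comm, ← succ_nsmul]
  have hT3 : δ • mulOp n (liftX n (divVF n (projVF n i)))
      = (δ * ((n : ℝ) + 1)) • mulOp n (xVar n i) := by
    rw [hdiv, liftX, map_nsmul, ← liftX, mulOp_nsmul]
    rw [← Nat.cast_smul_eq_nsmul ℝ, smul_smul]
    norm_num [liftX, xVar, mul_comm]
  rw [Lop, hT1, hT2, hT3]
  abel

lemma key_op (δ : ℝ) (i : Fin n) :
    divOp n * Lop n δ (projVF n i) - Lop n δ (projVF n i) * divOp n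
      = ((δ - 1) * ((n : ℝ) + 1) + 2) • dpOp n i - (2 : ℝ) • (dpOp n i * EpOp n) := by
  rw [Lop_proj_eq]
  have h1 : divOp n * (mulOp n (xVar n i) * ExOp n)
      = mulOp n (xVar n i) * (ExOp n * divOp n) + mulOp n (xVar n i) * divOp n
        + ExOp n * dpOp n i := by
    rw [← mul_assoc, divOp_comm_mulX, add_mul, mul_assoc, divOp_comm_Ex, dpOp_comm_Ex, mul_add]
  have h2 : divOp n * (RrOp n * dpOp n i)
      = RrOp n * (dpOp n i * divOp n) + ExOp n * dpOp n i + EpOp n * dpOp n i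
        + (n : ℝ) • dpOp n i := by
    rw [← mul_assoc, divOp_comm_Rr, add_mul, add_mul, add_mul, smul_mul_assoc, one_mul,
      mul_assoc, divOp_comm_dp]
  have h3 : divOp n * (mulOp n (xVar n i) * EpOp n)
      = mulOp n (xVar n i) * (EpOp n * divOp n) + mulOp n (xVar n i) * divOp n
        + EpOp n * dpOp n i + dpOp n i := by
    rw [← mul_assoc, divOp_comm_mulX, add_mul, mul_assoc, divOp_comm_Ep, dpOp_comm_Ep, mul_add]
    abel
  have h4 : divOp n * ((δ * ((n : ℝ) + 1)) • mulOp n (xVar n i))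
      = (δ * ((n : ℝ) + 1)) • (mulOp n (xVar n i) * divOp n)
        + (δ * ((n : ℝ) + 1)) • dpOp n i := by
    rw [mul_smul_comm, divOp_comm_mulX, smul_add]
  have he : EpOp n * dpOp n i = dpOp n i * EpOp n - dpOp n i := by
    rw [dpOp_comm_Ep]; abel
  simp only [mul_sub, sub_mul, mul_add, add_mul, h1, h2, h3, h4, he, divOp_comm_mulX, smul_mul_assoc,
    mul_smul_comm, mul_assoc]
  module

lemma weight_pwt (d : (Fin n ⊕ Fin n) →₀ ℕ) :
    Finsupp.weight (pwt n) d = ∑ j, d (Sum.inr j) := by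
  rw [Finsupp.weight_apply, Finsupp.sum_fintype _ _ (by simp)]
  rw [Fintype.sum_sum_type]
  simp [pwt]

lemma euler_monomial (d : (Fin n ⊕ Fin n) →₀ ℕ) (c : ℝ) :
    (EpOp n) (monomial d c) = (Finsupp.weight (pwt n) d : ℝ) • monomial d c := by
  rw [EpOp, LinearMap.sum_apply, weight_pwt]
  have key : ∀ j : Fin n, (mulOp n (pVar n j) * dpOp n j) (monomial d c)
      = (d (Sum.inr j) : ℝ) • monomial d c := by
    intro j
    rw [Module.End.mul_apply, dpOp_apply, mulOp_apply, pderiv_monomial, pVar]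
    rcases Nat.eq_zero_or_pos (d (Sum.inr j)) with h | h
    · simp [h]
    · rw [X, monomial_mul, one_mul]
      have : d - Finsupp.single (Sum.inr j) 1 + Finsupp.single (Sum.inr j) 1 = d := by
        rw [tsub_add_cancel_of_le]
        rwa [Finsupp.single_le_iff]
      rw [add_comm, this, smul_monomial]
      congr 1
      simp [smul_eq_mul]
      ring
  simp only [key]
  rw [← Finset.sum_smul]
  norm_cast

lemma euler_homog {P : PolySym n} {k : ℕ} (hP : IsPHomog n P k) :
    (EpOp n) P = (k : ℝ) • P := by
  conv_lhs => rw [← support_sum_monomial_coeff P]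
  rw [map_sum]
  calc ∑ d ∈ P.support, (EpOp n) (monomial d (coeff d P))
      = ∑ d ∈ P.support, (k : ℝ) • monomial d (coeff d P) := by
        refine Finset.sum_congr rfl fun d hd => ?_
        rw [euler_monomial, hP (mem_support_iff.mp hd)]
    _ = (k : ℝ) • P := by rw [← Finset.smul_sum, support_sum_monomial_coeff]

lemma weight_single_le {σ : Type*} [DecidableEq σ] (w : σ → ℕ) (j : σ) :
    Finsupp.weight w (Finsupp.single j 1) = w j := by
  rw [Finsupp.weight_apply, Finsupp.sum_single_index] <;> simp

lemma homog_pderiv {σ : Type*} [DecidableEq σ] {w : σ → ℕ} {P : MvPolynomial σ ℝ} {k : ℕ}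
    (h : IsWeightedHomogeneous w P k) (j : σ) :
    IsWeightedHomogeneous w (pderiv j P) (k - w j) := by
  have hrw : pderiv j P
      = ∑ d ∈ P.support, monomial (d - Finsupp.single j 1) (coeff d P * d j) := by
    conv_lhs => rw [← support_sum_monomial_coeff P]
    rw [map_sum]
    exact Finset.sum_congr rfl fun d _ => pderiv_monomial
  rw [hrw]
  have : ∀ d ∈ P.support,
      IsWeightedHomogeneous w (monomial (d - Finsupp.single j 1) (coeff d P * d j)) (k - w j) := by
    intro d hd
    rcases Nat.eq_zero_or_pos (d j) with h0 | h0
    · rw [h0]; simp only [Nat.cast_zero, mul_zero, map_zero]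
      exact isWeightedHomogeneous_zero ℝ _ _
    · apply isWeightedHomogeneous_monomial
      have hsub : d - Finsupp.single j 1 + Finsupp.single j 1 = d := by
        rw [tsub_add_cancel_of_le]
        rwa [Finsupp.single_le_iff]
      have hw : Finsupp.weight w (d - Finsupp.single j 1) + w j = k := by
        rw [← weight_single_le w j, ← map_add, hsub]
        exact h (mem_support_iff.mp hd)
      omega
  exact IsWeightedHomogeneous.sum P.support _ (k - w j) this

lemma homog_divOp {P : PolySym n} {k : ℕ} (h : IsPHomog n P k) :
    IsPHomog n (divOp n P) (k - 1) := by
  rw [divOp_eq, LinearMap.sum_apply]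
  refine IsWeightedHomogeneous.sum Finset.univ _ (k - 1) fun b _ => ?_
  rw [Module.End.mul_apply, dxOp_apply, dpOp_apply]
  have h1 : IsWeightedHomogeneous (pwt n) (pderiv (Sum.inr b) P) (k - 1) := by
    have := homog_pderiv h (Sum.inr b)
    simpa [pwt] using this
  have := homog_pderiv h1 (Sum.inl b)
  simpa [pwt] using this

lemma homog_pow {P : PolySym n} {k : ℕ} (h : IsPHomog n P k) (m : ℕ) :
    IsPHomog n ((divOp n ^ m) P) (k - m) := by
  induction m with
  | zero => simpa using h
  | succ m ih =>
      rw [pow_succ']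
      have := homog_divOp ih
      rw [Module.End.mul_apply] at *
      simpa [Nat.sub_sub] using this

lemma dp_zero_of_homog0 {Q : PolySym n} (h : IsPHomog n Q 0) (b : Fin n) :
    pderiv (Sum.inr b) Q = 0 := by
  conv_lhs => rw [← support_sum_monomial_coeff Q]
  rw [map_sum]
  apply Finset.sum_eq_zero
  intro d hd
  have h0 : Finsupp.weight (pwt n) d = 0 := h (mem_support_iff.mp hd)
  rw [weight_pwt] at h0
  have : d (Sum.inr b) = 0 := by
    have := Finset.sum_eq_zero_iff.mp h0 b (Finset.mem_univ b)
    exact this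
  rw [pderiv_monomial, this]
  simp

lemma divOp_zero_of_homog0 {Q : PolySym n} (h : IsPHomog n Q 0) : divOp n Q = 0 := by
  rw [divOp_eq, LinearMap.sum_apply]
  apply Finset.sum_eq_zero
  intro b _
  rw [Module.End.mul_apply, dpOp_apply, dp_zero_of_homog0 h b]
  simp

lemma pow_zero_of_gt {P : PolySym n} {k : ℕ} (h : IsPHomog n P k) {m : ℕ} (hm : k < m) :
    (divOp n ^ m) P = 0 := by
  induction m with
  | zero => omega
  | succ m ih =>
      rw [pow_succ', Module.End.mul_apply]
      rcases Nat.lt_or_ge k m with h' | h'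
      · rw [ih h']; simp
      · have hkm : k = m := by omega
        subst hkm
        exact divOp_zero_of_homog0 (by simpa using homog_pow h k)

lemma comm_single (δ : ℝ) (i : Fin n) {P : PolySym n} {k : ℕ} (hP : IsPHomog n P k) :
    divOp n (Lop n δ (projVF n i) P) - Lop n δ (projVF n i) (divOp n P)
      = (-2 * (k : ℝ) + 2 + (δ - 1) * ((n : ℝ) + 1)) • dpOp n i P := by
  have h := congrArg (fun T : Module.End ℝ (PolySym n) => T P) (key_op (n := n) δ i)
  simp only [LinearMap.sub_apply, Module.End.mul_apply, LinearMap.smul_apply] at h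
  rw [euler_homog hP, map_smul] at h
  rw [h]
  module

/-- On symbols homogeneous of degree `k` in `p`, the commutator of `D^m` with
the projective action of the inversion `X^i = x^i x^j ∂_j` is
`[D^m, L^δ_{X^i}] = d^k_m(δ) ∂_{p_i} D^{m-1}` with `d^k_m(δ) = m(-2k+m+1+(δ-1)(n+1))`. -/
theorem divOp_pow_commutator_projective (n k m : ℕ) (hm : 1 ≤ m) (δ : ℝ) (i : Fin n)
    (P : PolySym n) (hP : IsPHomog n P k) :
    (divOp n ^ m) (Lop n δ (projVF n i) P) - Lop n δ (projVF n i) ((divOp n ^ m) P)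
      = ((m : ℝ) * (-2 * (k : ℝ) + (m : ℝ) + 1 + (δ - 1) * ((n : ℝ) + 1))) •
          dpOp n i ((divOp n ^ (m - 1)) P) := by
  induction m, hm using Nat.le_induction with
  | base =>
      simp only [pow_one, Nat.sub_self, pow_zero, Module.End.one_apply, Nat.cast_one, one_mul]
      rw [comm_single δ i hP]
      congr 1
      ring
  | succ m hm ih =>
      have hpow : ∀ Q : PolySym n, (divOp n ^ (m + 1)) Q = divOp n ((divOp n ^ m) Q) := by
        intro Q; rw [pow_succ', Module.End.mul_apply]
      have hpowm : divOp n ((divOp n ^ (m - 1)) P) = (divOp n ^ m) P := by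
        conv_rhs => rw [show m = (m - 1) + 1 by omega]
        rw [pow_succ', Module.End.mul_apply]
      have hDdp : ∀ Q : PolySym n, divOp n (dpOp n i Q) = dpOp n i (divOp n Q) := by
        intro Q
        have := congrArg (fun T : Module.End ℝ (PolySym n) => T Q) (divOp_comm_dp (n := n) i)
        simpa using this
      have step : divOp n (Lop n δ (projVF n i) ((divOp n ^ m) P))
            - Lop n δ (projVF n i) ((divOp n ^ (m + 1)) P)
          = (-2 * ((k - m : ℕ) : ℝ) + 2 + (δ - 1) * ((n : ℝ) + 1)) •
              dpOp n i ((divOp n ^ m) P) := by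
        rw [hpow P]
        exact comm_single δ i (homog_pow hP m)
      have lhs_eq : (divOp n ^ (m + 1)) (Lop n δ (projVF n i) P)
          = divOp n (Lop n δ (projVF n i) ((divOp n ^ m) P))
            + ((m : ℝ) * (-2 * (k : ℝ) + (m : ℝ) + 1 + (δ - 1) * ((n : ℝ) + 1))) •
                dpOp n i ((divOp n ^ m) P) := by
        rw [hpow]
        have : (divOp n ^ m) (Lop n δ (projVF n i) P)
            = Lop n δ (projVF n i) ((divOp n ^ m) P)
              + ((m : ℝ) * (-2 * (k : ℝ) + (m : ℝ) + 1 + (δ - 1) * ((n : ℝ) + 1))) •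
                  dpOp n i ((divOp n ^ (m - 1)) P) := by
          rw [← ih]; abel
        rw [this, map_add, map_smul, hDdp, hpowm]
      rw [lhs_eq]
      have target : divOp n (Lop n δ (projVF n i) ((divOp n ^ m) P))
            + ((m : ℝ) * (-2 * (k : ℝ) + (m : ℝ) + 1 + (δ - 1) * ((n : ℝ) + 1))) •
                dpOp n i ((divOp n ^ m) P)
            - Lop n δ (projVF n i) ((divOp n ^ (m + 1)) P)
          = (((m : ℝ) * (-2 * (k : ℝ) + (m : ℝ) + 1 + (δ - 1) * ((n : ℝ) + 1)))
              + (-2 * ((k - m : ℕ) : ℝ) + 2 + (δ - 1) * ((n : ℝ) + 1))) •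
              dpOp n i ((divOp n ^ m) P) := by
        rw [add_smul, add_sub_right_comm, step]
        abel
      rw [target]
      simp only [Nat.add_sub_cancel]
      rcases le_or_gt m k with hmk | hmk
      · have hc : ((k - m : ℕ) : ℝ) = (k : ℝ) - (m : ℝ) := by
          push_cast [Nat.cast_sub hmk]; ring
        rw [hc]
        congr 1
        push_cast
        ring
      · have h0 : (divOp n ^ m) P = 0 := pow_zero_of_gt hP hmk
        rw [h0]
        simp
end
end

section
/- The operator D^l = (∂_{x^i}∂_{p_i})^l on symbols homogeneous of degree k in p and of weight δ is invariant under the projective Lie algebra sl_{n+1} (i.e. commutes with L^δ_X for all projective vector fields X, as a map to weight-δ symbols of degree k-l) if and only if δ = 1 + (2k - l - 1)/(n+1). -/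
open MvPolynomial

noncomputable section

/-!
For every polynomial vector field `X`,
`[D, L^δ_X] = -p_j (∂_c ∂_i X^j) ∂_{p_c} ∂_{p_i} + (δ - 1) (∂_j ∂_i X^j) ∂_{p_i}`,
so `D` commutes with the affine fields. For the inversion `X = x^i x^j ∂_j`, Euler's identity
turns this on symbols of `p`-degree `k + 1` into `((n + 1)(δ - 1) - 2k) ∂_{p_i}`; iterating,
`[D^(l+1), L^δ_X] = (l + 1)((n + 1)(δ - 1) - (2k + l)) D^l ∂_{p_i}` on symbols of degree
`k + l + 1`. On `(x^i)^l p_i^(k+l+1)` the operator `D^l ∂_{p_i}` does not vanish, so invariance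
holds exactly when this coefficient is zero.
-/

theorem Module.End.pow_succ_apply {R M : Type*} [Semiring R] [AddCommMonoid M] [Module R M]
    (f : Module.End R M) (m : ℕ) (x : M) : (f ^ (m + 1)) x = (f ^ m) (f x) := by
  rw [pow_succ, Module.End.mul_apply]

namespace MvPolynomial

theorem pderiv_pderiv_comm {R σ : Type*} [CommRing R] (u v : σ) (f : MvPolynomial σ R) :
    pderiv u (pderiv v f) = pderiv v (pderiv u f) := by
  have h : ⁅pderiv u, pderiv v⁆ = (0 : Derivation R (MvPolynomial σ R) (MvPolynomial σ R)) :=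
    derivation_ext fun i => by
      classical
      rw [Derivation.commutator_apply]
      simp [pderiv_X, Pi.single_apply, apply_ite]
  have := congr($h f)
  rwa [Derivation.commutator_apply, Derivation.zero_apply, sub_eq_zero] at this

theorem pderiv_pderiv_eq_zero_of_totalDegree_le_one {R σ : Type*} [CommSemiring R]
    {f : MvPolynomial σ R} (hf : f.totalDegree ≤ 1) (a c : σ) : pderiv c (pderiv a f) = 0 := by
  ext m
  rw [coeff_pderiv, coeff_pderiv, coeff_zero, coeff_eq_zero_of_totalDegree_lt, zero_mul, zero_mul]
  rw [← Finsupp.degree_apply, map_add, map_add, Finsupp.degree_single, Finsupp.degree_single]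
  omega

end MvPolynomial

section Symbols

open Finset

variable {n : ℕ}

theorem pderiv_inr_liftX (c : Fin n) (f : PolyDen n) : pderiv (Sum.inr c) (liftX n f) = 0 :=
  pderiv_eq_zero_of_notMem_vars fun h => by
    obtain ⟨i, -, hi⟩ := mem_vars_rename _ _ h
    exact Sum.inl_ne_inr hi

theorem pderiv_inl_liftX (c : Fin n) (f : PolyDen n) :
    pderiv (Sum.inl c) (liftX n f) = liftX n (pderiv c f) :=
  pderiv_rename Sum.inl_injective c f

theorem pderiv_inl_pVar (c j : Fin n) : pderiv (Sum.inl c) (pVar n j) = 0 :=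
  pderiv_X_of_ne Sum.inr_ne_inl

theorem pderiv_inr_pVar (c j : Fin n) :
    pderiv (Sum.inr c) (pVar n j) = if c = j then 1 else 0 := by
  simp [pVar, pderiv_X, Pi.single_apply, eq_comm]

theorem IsPHomog.pderiv_inl {P : PolySym n} {k : ℕ} (hP : IsPHomog n P k) (c : Fin n) :
    IsPHomog n (pderiv (Sum.inl c) P) k :=
  IsWeightedHomogeneous.pderiv hP rfl

theorem IsPHomog.pderiv_inr {P : PolySym n} {k : ℕ} (hP : IsPHomog n P (k + 1)) (c : Fin n) :
    IsPHomog n (pderiv (Sum.inr c) P) k :=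
  IsWeightedHomogeneous.pderiv hP rfl

theorem IsPHomog.sum_pVar_mul_pderiv {P : PolySym n} {k : ℕ} (hP : IsPHomog n P k) :
    ∑ j, pVar n j * pderiv (Sum.inr j) P = (k : ℝ) • P := by
  have h := IsWeightedHomogeneous.sum_weight_X_mul_pderiv hP
  simpa [Fintype.sum_sum_type, pwt, pVar, Nat.cast_smul_eq_nsmul] using h

theorem divOp_apply (P : PolySym n) :
    divOp n P = ∑ c, pderiv (Sum.inl c) (pderiv (Sum.inr c) P) := by
  simp [divOp, dxOp, dpOp, LinearMap.sum_apply]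

theorem Lop_apply (δ : ℝ) (Xf : PolyVF n) (P : PolySym n) :
    Lop n δ Xf P = ∑ i, liftX n (Xf i) * pderiv (Sum.inl i) P
      - ∑ i, ∑ j, pVar n j * liftX n (pderiv i (Xf j)) * pderiv (Sum.inr i) P
      + δ • (liftX n (divVF n Xf) * P) := by
  simp [Lop, mulOp, dxOp, dpOp, LinearMap.sum_apply, mul_assoc]

theorem IsPHomog.divOp {P : PolySym n} {k : ℕ} (hP : IsPHomog n P (k + 1)) :
    IsPHomog n (divOp n P) k := by
  rw [divOp_apply]
  exact IsWeightedHomogeneous.sum _ _ _ fun c _ => (hP.pderiv_inr c).pderiv_inl c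

theorem divOp_pderiv (v : Fin n ⊕ Fin n) (P : PolySym n) :
    divOp n (pderiv v P) = pderiv v (divOp n P) := by
  simp only [divOp_apply, map_sum, pderiv_pderiv_comm _ v]

theorem divOp_mul (q f : PolySym n) :
    divOp n (q * f) = q * divOp n f
      + ∑ c, (pderiv (Sum.inl c) q * pderiv (Sum.inr c) f
          + pderiv (Sum.inr c) q * pderiv (Sum.inl c) f
          + pderiv (Sum.inl c) (pderiv (Sum.inr c) q) * f) := by
  rw [divOp_apply, divOp_apply, mul_sum, ← sum_add_distrib]
  refine sum_congr rfl fun c _ => ?_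
  rw [pderiv_mul, map_add, pderiv_mul, pderiv_mul]
  ring

theorem divOp_liftX_mul (g : PolyDen n) (f : PolySym n) :
    divOp n (liftX n g * f) = liftX n g * divOp n f
      + ∑ c, liftX n (pderiv c g) * pderiv (Sum.inr c) f := by
  simp [divOp_mul, pderiv_inr_liftX, pderiv_inl_liftX]

theorem divOp_pVar_mul_liftX_mul (j : Fin n) (g : PolyDen n) (f : PolySym n) :
    divOp n (pVar n j * liftX n g * f) = pVar n j * liftX n g * divOp n f
      + ∑ c, pVar n j * liftX n (pderiv c g) * pderiv (Sum.inr c) f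
      + liftX n g * pderiv (Sum.inl j) f + liftX n (pderiv j g) * f := by
  rw [divOp_mul]
  simp only [pderiv_mul, pderiv_inr_liftX, pderiv_inl_liftX, pderiv_inl_pVar, pderiv_inr_pVar,
    zero_mul, mul_zero, add_zero, zero_add, ite_mul, one_mul, sum_add_distrib,
    apply_ite (pderiv _), map_zero, sum_ite_eq', mem_univ, if_true]
  ring

theorem divOp_Lop (δ : ℝ) (Xf : PolyVF n) (P : PolySym n) :
    divOp n (Lop n δ Xf P) = Lop n δ Xf (divOp n P)
      - ∑ i, ∑ j, ∑ c, pVar n j * liftX n (pderiv c (pderiv i (Xf j)))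
          * pderiv (Sum.inr c) (pderiv (Sum.inr i) P)
      + (δ - 1) • ∑ i, ∑ j, liftX n (pderiv j (pderiv i (Xf j))) * pderiv (Sum.inr i) P := by
  have mixed_terms :
      ∑ i, ∑ c, liftX n (pderiv c (Xf i)) * pderiv (Sum.inr c) (pderiv (Sum.inl i) P)
      = ∑ i, ∑ j, liftX n (pderiv i (Xf j)) * pderiv (Sum.inl j) (pderiv (Sum.inr i) P) := by
    rw [sum_comm]
    simp only [pderiv_pderiv_comm (Sum.inr _)]
  have pderiv_divVF : ∑ c, liftX n (pderiv c (divVF n Xf)) * pderiv (Sum.inr c) P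
      = ∑ i, ∑ j, liftX n (pderiv j (pderiv i (Xf j))) * pderiv (Sum.inr i) P := by
    simp only [divVF, map_sum, liftX, sum_mul, pderiv_pderiv_comm _ (_ : Fin n)]
  rw [Lop_apply, Lop_apply, map_add, map_sub, map_smul, map_sum, map_sum]
  simp only [map_sum, divOp_liftX_mul, divOp_pVar_mul_liftX_mul, divOp_pderiv, sum_add_distrib,
    mixed_terms, pderiv_divVF]
  module

theorem divOp_Lop_of_totalDegree_le_one (δ : ℝ) {Xf : PolyVF n}
    (hXf : ∀ i, (Xf i).totalDegree ≤ 1) (P : PolySym n) :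
    divOp n (Lop n δ Xf P) = Lop n δ Xf (divOp n P) := by
  simp [divOp_Lop, pderiv_pderiv_eq_zero_of_totalDegree_le_one (hXf _), liftX]

theorem divOp_pow_Lop_of_totalDegree_le_one (δ : ℝ) {Xf : PolyVF n}
    (hXf : ∀ i, (Xf i).totalDegree ≤ 1) (l : ℕ) (P : PolySym n) :
    (divOp n ^ l) (Lop n δ Xf P) = Lop n δ Xf ((divOp n ^ l) P) := by
  induction l generalizing P with
  | zero => rfl
  | succ l ih =>
    rw [Module.End.pow_succ_apply, Module.End.pow_succ_apply,
      divOp_Lop_of_totalDegree_le_one δ hXf, ih]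

theorem pderiv_pderiv_projVF (i a c j : Fin n) :
    pderiv c (pderiv a (projVF n i j))
      = (if a = i ∧ c = j then 1 else 0) + (if a = j ∧ c = i then 1 else 0) := by
  rw [projVF, pderiv_mul, map_add, pderiv_mul, pderiv_mul]
  simp only [pderiv_X, Pi.single_apply, apply_ite (pderiv c), pderiv_one, map_zero]
  split_ifs <;> grind

theorem divOp_Lop_projVF (δ : ℝ) (i : Fin n) {k : ℕ} {P : PolySym n}
    (hP : IsPHomog n P (k + 1)) :
    divOp n (Lop n δ (projVF n i) P) = Lop n δ (projVF n i) (divOp n P)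
      + (((n : ℝ) + 1) * (δ - 1) - 2 * k) • pderiv (Sum.inr i) P := by
  have second_order : ∑ a, ∑ j, ∑ c, pVar n j * liftX n (pderiv c (pderiv a (projVF n i j)))
        * pderiv (Sum.inr c) (pderiv (Sum.inr a) P) = (2 * (k : ℝ)) • pderiv (Sum.inr i) P := by
    simp only [pderiv_pderiv_projVF, liftX, map_add, apply_ite (rename _), map_one, map_zero,
      add_mul, mul_add, mul_ite, ite_mul, mul_one, mul_zero, zero_mul, ite_and, sum_add_distrib,
      sum_ite_irrel, sum_ite_eq, sum_ite_eq', mem_univ, if_true, sum_const_zero]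
    rw [(hP.pderiv_inr i).sum_pVar_mul_pderiv]
    simp only [pderiv_pderiv_comm (Sum.inr i)]
    rw [(hP.pderiv_inr i).sum_pVar_mul_pderiv, two_mul, add_smul]
  have first_order :
      ∑ a, ∑ j, liftX n (pderiv j (pderiv a (projVF n i j))) * pderiv (Sum.inr a) P
      = ((n : ℝ) + 1) • pderiv (Sum.inr i) P := by
    simp only [pderiv_pderiv_projVF, liftX, map_add, apply_ite (rename _), map_one, map_zero,
      add_mul, ite_mul, one_mul, zero_mul, ite_and, sum_add_distrib,
      sum_ite_irrel, sum_ite_eq, sum_ite_eq', mem_univ, if_true, sum_const_zero, sum_const,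
      card_univ]
    rw [Fintype.card_fin, ← Nat.cast_smul_eq_nsmul ℝ, add_smul, one_smul]
  rw [divOp_Lop, second_order, first_order]
  module

theorem divOp_pow_succ_Lop_projVF (δ : ℝ) (i : Fin n) (k l : ℕ) {P : PolySym n}
    (hP : IsPHomog n P (k + l + 1)) :
    (divOp n ^ (l + 1)) (Lop n δ (projVF n i) P) = Lop n δ (projVF n i) ((divOp n ^ (l + 1)) P)
      + (((l : ℝ) + 1) * (((n : ℝ) + 1) * (δ - 1) - (2 * k + l)))
        • (divOp n ^ l) (pderiv (Sum.inr i) P) := by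
  induction l generalizing P with
  | zero =>
    rw [pow_one, pow_zero, divOp_Lop_projVF δ i hP, Module.End.one_apply]
    congr 2
    push_cast
    ring
  | succ l ih =>
    rw [Module.End.pow_succ_apply, divOp_Lop_projVF δ i hP, map_add, map_smul, ih hP.divOp,
      ← divOp_pderiv, ← Module.End.pow_succ_apply, ← Module.End.pow_succ_apply, add_assoc,
      ← add_smul]
    congr 2
    push_cast
    ring

theorem pderiv_inl_xVar_pow_mul_pVar_pow (i : Fin n) (a b : ℕ) :
    pderiv (Sum.inl i) (xVar n i ^ (a + 1) * pVar n i ^ b)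
      = (a + 1) • (xVar n i ^ a * pVar n i ^ b) := by
  rw [pderiv_mul, pderiv_pow, pderiv_pow, xVar, pVar, pderiv_X_self, pderiv_X_of_ne Sum.inr_ne_inl]
  simp only [mul_one, mul_zero, add_zero, add_tsub_cancel_right, nsmul_eq_mul]
  push_cast
  ring

theorem pderiv_inr_xVar_pow_mul_pVar_pow (i : Fin n) (a b : ℕ) :
    pderiv (Sum.inr i) (xVar n i ^ a * pVar n i ^ (b + 1))
      = (b + 1) • (xVar n i ^ a * pVar n i ^ b) := by
  rw [pderiv_mul, pderiv_pow, pderiv_pow, xVar, pVar, pderiv_X_self, pderiv_X_of_ne Sum.inl_ne_inr]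
  simp only [mul_one, mul_zero, zero_mul, zero_add, add_tsub_cancel_right, nsmul_eq_mul]
  push_cast
  ring

theorem pderiv_inr_xVar_pow_mul_pVar_pow_of_ne {c i : Fin n} (h : c ≠ i) (a b : ℕ) :
    pderiv (Sum.inr c) (xVar n i ^ a * pVar n i ^ b) = 0 := by
  rw [pderiv_mul, pderiv_pow, pderiv_pow, xVar, pVar, pderiv_X_of_ne Sum.inl_ne_inr,
    pderiv_X_of_ne (Sum.inr_injective.ne h.symm)]
  simp only [mul_zero, zero_mul, add_zero]

theorem divOp_xVar_pow_mul_pVar_pow (i : Fin n) (a b : ℕ) :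
    divOp n (xVar n i ^ (a + 1) * pVar n i ^ (b + 1))
      = ((a + 1) * (b + 1)) • (xVar n i ^ a * pVar n i ^ b) := by
  rw [divOp_apply, sum_eq_single i (fun c _ hc => by
      rw [pderiv_inr_xVar_pow_mul_pVar_pow_of_ne hc, map_zero]) (by simp),
    pderiv_inr_xVar_pow_mul_pVar_pow, (pderiv _).map_smul_of_tower,
    pderiv_inl_xVar_pow_mul_pVar_pow, smul_smul, mul_comm]

theorem divOp_pow_xVar_pow_mul_pVar_pow (i : Fin n) (a b l : ℕ) :
    (divOp n ^ l) (xVar n i ^ (a + l) * pVar n i ^ (b + l))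
      = ((a + l).descFactorial l * (b + l).descFactorial l)
        • (xVar n i ^ a * pVar n i ^ b) := by
  induction l generalizing a b with
  | zero => simp
  | succ l ih =>
    rw [Module.End.pow_succ_apply, ← add_assoc, ← add_assoc, divOp_xVar_pow_mul_pVar_pow,
      map_nsmul, ih, smul_smul, Nat.succ_descFactorial_succ, Nat.succ_descFactorial_succ]
    congr 1
    ring

theorem isPHomog_xVar_pow_mul_pVar_pow (i : Fin n) (a b : ℕ) :
    IsPHomog n (xVar n i ^ a * pVar n i ^ b) b := by
  have hx := (isWeightedHomogeneous_X ℝ (pwt n) (Sum.inl i)).pow a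
  have hp := (isWeightedHomogeneous_X ℝ (pwt n) (Sum.inr i)).pow b
  simpa [IsPHomog, pwt, xVar, pVar] using hx.mul hp

theorem divOp_pow_pderiv_inr_xVar_pow_mul_pVar_pow_ne_zero (i : Fin n) (k l : ℕ) :
    (divOp n ^ l) (pderiv (Sum.inr i) (xVar n i ^ l * pVar n i ^ (k + l + 1))) ≠ 0 := by
  have h := divOp_pow_xVar_pow_mul_pVar_pow i 0 k l
  rw [zero_add] at h
  rw [pderiv_inr_xVar_pow_mul_pVar_pow, map_nsmul, h, smul_smul, pow_zero, one_mul]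
  exact smul_ne_zero (by simp [Nat.descFactorial_eq_zero_iff_lt]) (pow_ne_zero _ (X_ne_zero _))

end Symbols

/-- The operator `D^l` on weight-`δ` symbols homogeneous of degree `k` in `p`
is `sl_{n+1}`-invariant (commutes with `L^δ_X` for every projective vector field `X`) if and
only if `δ = 1 + (2k - l - 1)/(n+1)`. -/
theorem divOp_pow_projectively_invariant_iff (n k l : ℕ) (hn : 1 ≤ n) (hl : 1 ≤ l)
    (hlk : l ≤ k) (δ : ℝ) :
    (∀ Xf ∈ projGenSet n, ∀ P : PolySym n, IsPHomog n P k →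
        Lop n δ Xf ((divOp n ^ l) P) = (divOp n ^ l) (Lop n δ Xf P))
      ↔ δ = 1 + (2 * (k : ℝ) - (l : ℝ) - 1) / ((n : ℝ) + 1) := by
  obtain ⟨l, rfl⟩ : ∃ m, l = m + 1 := ⟨l - 1, by omega⟩
  obtain ⟨k, rfl⟩ : ∃ m, k = m + l + 1 := ⟨k - l - 1, by omega⟩
  have hδ : δ = 1 + (2 * ((k + l + 1 : ℕ) : ℝ) - ((l + 1 : ℕ) : ℝ) - 1) / ((n : ℝ) + 1)
      ↔ ((n : ℝ) + 1) * (δ - 1) - (2 * k + l) = 0 := by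
    rw [← sub_eq_iff_eq_add', eq_div_iff (by positivity)]
    push_cast
    constructor <;> intro h <;> linarith
  rw [hδ]
  constructor
  · intro H
    let i : Fin n := ⟨0, hn⟩
    have hP := isPHomog_xVar_pow_mul_pVar_pow i l (k + l + 1)
    have h := H _ (Or.inr ⟨i, rfl⟩) _ hP
    rw [divOp_pow_succ_Lop_projVF δ i k l hP, left_eq_add, smul_eq_zero] at h
    have := h.resolve_right (divOp_pow_pderiv_inr_xVar_pow_mul_pVar_pow_ne_zero i k l)
    exact (mul_eq_zero.mp this).resolve_left (by positivity)
  · rintro hδ Xf (haff | ⟨i, rfl⟩) P hP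
    · exact (divOp_pow_Lop_of_totalDegree_le_one δ haff _ P).symm
    · rw [divOp_pow_succ_Lop_projVF δ i k l hP, hδ, mul_zero, zero_smul, add_zero]
end
end

section
/- Let g be a Lie algebra of vector fields containing translations and the dilation x^i∂_i. Any operator A from weight-δ symbols homogeneous of degree k in p to weight-δ symbols of degree l < k that commutes with the actions L^δ of translations and dilation is a differential operator with constant coefficients in the generators p_i, ∂_{x^i}, ∂_{p_i}, whose degree in ∂_{x^i} equals its degree in ∂_{p_i} minus its degree in p_i; hence the space of such invariant operators is finite-dimensional and independent of δ. -/
open MvPolynomial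

noncomputable section

/-- The symbol monomial `p^a`. -/
def pMonomial (n : ℕ) (a : Fin n →₀ ℕ) : PolySym n := monomial (a.mapDomain Sum.inr) 1

/-- The constant-coefficient differential operator `∂^b` on symbols, `b` a multi-index in the
variables `(x, p)`. -/
def derivMultiSym (n : ℕ) (b : (Fin n ⊕ Fin n) →₀ ℕ) (P : PolySym n) : PolySym n :=
  ∑ m ∈ P.support, (P.coeff m * ∏ v, (Nat.descFactorial (m v) (b v) : ℝ)) • monomial (m - b) 1

/-!
Translation invariance says that `A` commutes with the `∂_{x^i}`; dilation invariance, combined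
with Euler's identity in `p`, says that `A` lowers the degree in `x` by `s = k - l`. An operator
with these two properties is determined by its values on the monomials `x^β p^c` with `|β| = s`:
if it vanishes there, then by induction on `m` all `x`-derivatives of its value on `x^m p^b`
vanish, so the `x`-Euler operator kills that value, which is also an eigenvector of eigenvalue
`|m| - s`. The values `A (x^β p^c)` are polynomials in `p` alone, and the constant-coefficient
operator `∑ coeff_{p^a} (A (x^β p^c)) / (β! c!) · p^a ∂_x^β ∂_p^c` has the same values, so it
equals `A`. The divergences of the translations and of the dilation are constant, so changing
`δ` changes `L^δ_X` by a scalar.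
-/

lemma Nat.descFactorial_mul_tsub (a b : ℕ) :
    a.descFactorial b * (a - b) = a * (a - 1).descFactorial b := by
  cases a with
  | zero => simp
  | succ a =>
    rw [mul_comm, ← Nat.descFactorial_succ, Nat.succ_descFactorial_succ, Nat.add_sub_cancel]

namespace Finsupp

variable {σ : Type*}

lemma degree_tsub_add_degree {μ B : σ →₀ ℕ} (h : B ≤ μ) :
    (μ - B).degree + B.degree = μ.degree := by
  rw [← map_add, tsub_add_cancel_of_le h]

lemma eq_of_le_of_degree_eq {μ B : σ →₀ ℕ} (h : B ≤ μ) (hd : B.degree = μ.degree) : B = μ := by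
  have : (μ - B).degree = 0 := by have := degree_tsub_add_degree h; omega
  exact le_antisymm h (tsub_eq_zero_iff_le.mp ((degree_eq_zero_iff _).mp this))

lemma sub_single_one_lt {m : σ →₀ ℕ} {i : σ} (h : m i ≠ 0) : m - single i 1 < m :=
  lt_of_le_of_ne tsub_le_self fun he => by
    have := DFunLike.congr_fun he i
    simp only [tsub_apply, single_eq_same] at this
    omega

lemma sumElim_tsub {α β : Type*} (m m' : α →₀ ℕ) (b b' : β →₀ ℕ) :
    sumElim m b - sumElim m' b' = sumElim (m - m') (b - b') := by
  ext (_ | _) <;> simp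

lemma degree_sumElim {α β : Type*} (m : α →₀ ℕ) (b : β →₀ ℕ) :
    (sumElim m b).degree = m.degree + b.degree :=
  sum_sumElim m b fun _ e => e

lemma prod_descFactorial_eq_zero_of_not_le [Fintype σ] {μ B : σ →₀ ℕ} (h : ¬B ≤ μ) :
    ∏ v, ((μ v).descFactorial (B v) : ℝ) = 0 := by
  obtain ⟨v, hv⟩ := not_forall.mp h
  exact Finset.prod_eq_zero (Finset.mem_univ v)
    (by exact_mod_cast Nat.descFactorial_eq_zero_iff_lt.mpr (not_le.mp hv))

lemma prod_descFactorial_mul_tsub [Fintype σ] [DecidableEq σ] (μ B : σ →₀ ℕ) (v : σ) :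
    (∏ w, ((μ w).descFactorial (B w) : ℝ)) * ((μ v - B v : ℕ) : ℝ) =
      μ v * ∏ w, (((μ - single v 1 : σ →₀ ℕ) w).descFactorial (B w) : ℝ) := by
  have hrest : ∏ w ∈ Finset.univ.erase v,
      (((μ - single v 1 : σ →₀ ℕ) w).descFactorial (B w) : ℝ) =
        ∏ w ∈ Finset.univ.erase v, ((μ w).descFactorial (B w) : ℝ) :=
    Finset.prod_congr rfl fun w hw => by
      rw [tsub_apply, single_eq_of_ne (Finset.ne_of_mem_erase hw), tsub_zero]
  have key := congrArg (Nat.cast (R := ℝ)) (Nat.descFactorial_mul_tsub (μ v) (B v))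
  rw [Nat.cast_mul, Nat.cast_mul] at key
  rw [← Finset.mul_prod_erase _ _ (Finset.mem_univ v),
    ← Finset.mul_prod_erase _ _ (Finset.mem_univ v), hrest, tsub_apply, single_eq_same]
  linear_combination (∏ w ∈ Finset.univ.erase v, ((μ w).descFactorial (B w) : ℝ)) * key

end Finsupp

namespace AffineInvariant

open Finsupp (sumElim)

variable {n : ℕ}

def xpMonomial (m b : Fin n →₀ ℕ) : PolySym n := monomial (sumElim m b) 1

def xEulerOp (n : ℕ) : Module.End ℝ (PolySym n) := ∑ i, mulOp n (xVar n i) ∘ₗ dxOp n i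

def multiIndices (n s : ℕ) : Finset (Fin n →₀ ℕ) := Finset.finsuppAntidiag Finset.univ s

lemma mem_multiIndices {s : ℕ} {a : Fin n →₀ ℕ} : a ∈ multiIndices n s ↔ a.degree = s := by
  simp [multiIndices, Finsupp.degree_eq_sum]

lemma weight_pwt_sumElim (m b : Fin n →₀ ℕ) :
    Finsupp.weight (pwt n) (sumElim m b) = b.degree := by
  simp [Finsupp.weight_apply, pwt, Finsupp.degree_apply, Finsupp.sum]

lemma isPHomog_xpMonomial (m b : Fin n →₀ ℕ) : IsPHomog n (xpMonomial m b) b.degree :=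
  isWeightedHomogeneous_monomial _ _ _ (weight_pwt_sumElim m b)

lemma pMonomial_eq (a : Fin n →₀ ℕ) : pMonomial n a = xpMonomial 0 a := by
  simp [pMonomial, xpMonomial, Finsupp.sumElim_eq_add]

lemma pMonomial_mul_xpMonomial (a m b : Fin n →₀ ℕ) :
    pMonomial n a * xpMonomial m b = xpMonomial m (a + b) := by
  rw [pMonomial_eq, xpMonomial, xpMonomial, monomial_mul, ← Finsupp.sumElim_add, zero_add,
    one_mul, xpMonomial]

lemma dxOp_apply (i : Fin n) (P : PolySym n) : dxOp n i P = pderiv (Sum.inl i) P := rfl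

lemma dxOp_xpMonomial (i : Fin n) (m b : Fin n →₀ ℕ) :
    dxOp n i (xpMonomial m b) = (m i : ℝ) • xpMonomial (m - Finsupp.single i 1) b := by
  rw [dxOp_apply, xpMonomial, pderiv_monomial, ← Finsupp.sumElim_single_zero,
    Finsupp.sumElim_tsub, tsub_zero, one_mul, Finsupp.sumElim_inl, xpMonomial, smul_monomial,
    smul_eq_mul, mul_one]

lemma pderiv_inl_pMonomial (i : Fin n) (a : Fin n →₀ ℕ) :
    pderiv (Sum.inl i) (pMonomial n a) = 0 := by
  simp [← dxOp_apply, pMonomial_eq, dxOp_xpMonomial]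

lemma xEulerOp_apply (P : PolySym n) :
    xEulerOp n P = ∑ i, X (Sum.inl i) * pderiv (Sum.inl i) P := by
  simp [xEulerOp, mulOp, xVar, dxOp_apply]

lemma xEulerOp_monomial (μ : Fin n ⊕ Fin n →₀ ℕ) (c : ℝ) :
    xEulerOp n (monomial μ c) = ((∑ i, μ (Sum.inl i) : ℕ) : ℝ) • monomial μ c := by
  simp only [xEulerOp_apply, X_mul_pderiv_monomial, Nat.cast_sum, Finset.sum_smul,
    Nat.cast_smul_eq_nsmul]

lemma xEulerOp_xpMonomial (m b : Fin n →₀ ℕ) :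
    xEulerOp n (xpMonomial m b) = (m.degree : ℝ) • xpMonomial m b := by
  simp [xpMonomial, xEulerOp_monomial, Finsupp.degree_eq_sum]

lemma coeff_sumElim_xEulerOp (m b : Fin n →₀ ℕ) (P : PolySym n) :
    coeff (sumElim m b) (xEulerOp n P) = (m.degree : ℝ) * coeff (sumElim m b) P := by
  induction P using MvPolynomial.induction_on' with
  | monomial ν c =>
    rw [xEulerOp_monomial, coeff_smul, coeff_monomial, smul_eq_mul]
    split_ifs with h <;> simp [h, Finsupp.degree_eq_sum]
  | add P Q hP hQ => rw [map_add, coeff_add, coeff_add, hP, hQ, mul_add]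

lemma xEulerOp_eq_zero_of_dxOp_eq_zero {Q : PolySym n} (h : ∀ i, dxOp n i Q = 0) :
    xEulerOp n Q = 0 := by
  simp [xEulerOp, mulOp, h]

lemma eulerOp_of_isPHomog {P : PolySym n} {k : ℕ} (h : IsPHomog n P k) :
    eulerOp n P = (k : ℝ) • P := by
  have := IsWeightedHomogeneous.sum_weight_X_mul_pderiv h
  simp only [Fintype.sum_sum_type, pwt, Sum.elim_inl, Sum.elim_inr, zero_smul, one_smul,
    Finset.sum_const_zero, zero_add] at this
  simpa [eulerOp, mulOp, pVar, dpOp, Algebra.smul_def] using this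

lemma map_eq_zero_of_isPHomog (T : Module.End ℝ (PolySym n)) {k : ℕ}
    (hT : ∀ m b : Fin n →₀ ℕ, b.degree = k → T (xpMonomial m b) = 0)
    {P : PolySym n} (hP : IsPHomog n P k) : T P = 0 := by
  rw [P.as_sum, map_sum]
  refine Finset.sum_eq_zero fun μ hμ => ?_
  obtain ⟨⟨m, b⟩, rfl⟩ := Finsupp.sumFinsuppEquivProdFinsupp.symm.surjective μ
  rw [Finsupp.sumFinsuppEquivProdFinsupp_symm_apply] at hμ ⊢
  have hb : b.degree = k := by
    simpa [weight_pwt_sumElim] using hP (mem_support_iff.mp hμ)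
  rw [← mul_one (coeff _ P), ← smul_eq_mul, ← smul_monomial, map_smul]
  exact (hT m b hb).symm ▸ smul_zero _

lemma eq_sum_pMonomial_of_xEulerOp_eq_zero {Q : PolySym n} {l : ℕ} (hQ : IsPHomog n Q l)
    (hx : xEulerOp n Q = 0) :
    Q = ∑ a ∈ multiIndices n l, coeff (sumElim 0 a) Q • pMonomial n a := by
  have hsupp : Q.support ⊆ (multiIndices n l).image (sumElim 0) := by
    intro μ hμ
    obtain ⟨⟨m, b⟩, rfl⟩ := Finsupp.sumFinsuppEquivProdFinsupp.symm.surjective μ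
    rw [Finsupp.sumFinsuppEquivProdFinsupp_symm_apply] at hμ ⊢
    have hm : m = 0 := by
      have := coeff_sumElim_xEulerOp m b Q
      rw [hx, coeff_zero, eq_comm, mul_eq_zero, or_iff_left (mem_support_iff.mp hμ)] at this
      exact (Finsupp.degree_eq_zero_iff m).mp (by exact_mod_cast this)
    have hb : b.degree = l := by
      simpa [weight_pwt_sumElim] using hQ (mem_support_iff.mp hμ)
    exact Finset.mem_image.mpr ⟨b, mem_multiIndices.mpr hb, hm ▸ rfl⟩
  conv_lhs => rw [Q.as_sum]
  rw [Finset.sum_subset hsupp fun μ _ hμ => by rw [notMem_support_iff.mp hμ, monomial_zero],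
    Finset.sum_image fun a _ a' _ h => Finsupp.ext fun i => DFunLike.congr_fun h (Sum.inr i)]
  refine Finset.sum_congr rfl fun a _ => ?_
  rw [pMonomial_eq, xpMonomial, smul_monomial, smul_eq_mul, mul_one]

theorem map_xpMonomial_eq_zero {T : Module.End ℝ (PolySym n)} {k s : ℕ}
    (hdx : ∀ i m b, b.degree = k →
      T (dxOp n i (xpMonomial m b)) = dxOp n i (T (xpMonomial m b)))
    (hx : ∀ m b, b.degree = k →
      xEulerOp n (T (xpMonomial m b)) = ((m.degree : ℝ) - s) • T (xpMonomial m b))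
    (h0 : ∀ m b, m.degree = s → b.degree = k → T (xpMonomial m b) = 0)
    (m b : Fin n →₀ ℕ) (hb : b.degree = k) : T (xpMonomial m b) = 0 := by
  induction m using WellFoundedLT.induction with
  | _ m ih =>
  by_cases hm : m.degree = s
  · exact h0 m b hm hb
  have hdx0 : ∀ i, dxOp n i (T (xpMonomial m b)) = 0 := by
    intro i
    rw [← hdx i m b hb, dxOp_xpMonomial, map_smul]
    by_cases hi : m i = 0
    · simp [hi]
    · rw [ih _ (Finsupp.sub_single_one_lt hi), smul_zero]
  have := hx m b hb
  rw [xEulerOp_eq_zero_of_dxOp_eq_zero hdx0, eq_comm, smul_eq_zero] at this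
  exact this.resolve_left (sub_ne_zero.mpr (by exact_mod_cast hm))

lemma derivMultiSym_eq_sum_of_support_subset (B : Fin n ⊕ Fin n →₀ ℕ) {P : PolySym n}
    {s : Finset (Fin n ⊕ Fin n →₀ ℕ)} (hs : P.support ⊆ s) :
    derivMultiSym n B P =
      ∑ μ ∈ s, (P.coeff μ * ∏ v, ((μ v).descFactorial (B v) : ℝ)) • monomial (μ - B) 1 :=
  Finset.sum_subset hs fun μ _ hμ => by rw [notMem_support_iff.mp hμ, zero_mul, zero_smul]

def derivMultiSymLinear (n : ℕ) (B : Fin n ⊕ Fin n →₀ ℕ) : Module.End ℝ (PolySym n) where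
  toFun := derivMultiSym n B
  map_add' P Q := by
    rw [derivMultiSym_eq_sum_of_support_subset B support_add,
      derivMultiSym_eq_sum_of_support_subset B Finset.subset_union_left,
      derivMultiSym_eq_sum_of_support_subset B Finset.subset_union_right,
      ← Finset.sum_add_distrib]
    simp only [coeff_add, add_mul, add_smul]
  map_smul' c P := by
    rw [derivMultiSym_eq_sum_of_support_subset B support_smul, derivMultiSym, Finset.smul_sum]
    simp only [coeff_smul, smul_eq_mul, mul_assoc, smul_smul, RingHom.id_apply]

lemma derivMultiSymLinear_apply (B : Fin n ⊕ Fin n →₀ ℕ) (P : PolySym n) :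
    derivMultiSymLinear n B P = derivMultiSym n B P := rfl

lemma derivMultiSym_monomial (B μ : Fin n ⊕ Fin n →₀ ℕ) (c : ℝ) :
    derivMultiSym n B (monomial μ c) =
      (c * ∏ v, ((μ v).descFactorial (B v) : ℝ)) • monomial (μ - B) 1 := by
  rw [derivMultiSym_eq_sum_of_support_subset B (support_monomial_subset (a := c)),
    Finset.sum_singleton, coeff_monomial, if_pos rfl]

lemma derivMultiSym_monomial_of_degree_eq {B μ : Fin n ⊕ Fin n →₀ ℕ}
    (h : B.degree = μ.degree) (c : ℝ) :
    derivMultiSym n B (monomial μ c) =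
      if B = μ then (c * ∏ v, ((μ v).factorial : ℝ)) • 1 else 0 := by
  rw [derivMultiSym_monomial]
  split_ifs with hB
  · simp [hB, Nat.descFactorial_self]
  · rw [Finsupp.prod_descFactorial_eq_zero_of_not_le
      fun hle => hB (Finsupp.eq_of_le_of_degree_eq hle h), mul_zero, zero_smul]

lemma pderiv_derivMultiSym (v : Fin n ⊕ Fin n) (B : Fin n ⊕ Fin n →₀ ℕ) (P : PolySym n) :
    pderiv v (derivMultiSym n B P) = derivMultiSym n B (pderiv v P) := by
  change ((pderiv v).toLinearMap ∘ₗ derivMultiSymLinear n B) P =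
    (derivMultiSymLinear n B ∘ₗ (pderiv v).toLinearMap) P
  congr 1
  refine MvPolynomial.linearMap_ext fun μ => LinearMap.ext_ring ?_
  simp only [LinearMap.comp_apply, derivMultiSymLinear_apply, Derivation.coeFn_coe]
  rw [derivMultiSym_monomial, Derivation.map_smul, pderiv_monomial, pderiv_monomial,
    derivMultiSym_monomial, smul_monomial, smul_monomial, tsub_right_comm]
  congr 1
  simpa only [one_mul, smul_eq_mul, mul_one, Finsupp.tsub_apply]
    using Finsupp.prod_descFactorial_mul_tsub μ B v

lemma divVF_transVF (i : Fin n) : divVF n (transVF n i) = 0 := by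
  simp [divVF, transVF, apply_ite]

lemma divVF_dilVF : divVF n (dilVF n) = C (n : ℝ) := by
  simp [divVF, dilVF]

lemma Lop_transVF (δ : ℝ) (i : Fin n) : Lop n δ (transVF n i) = dxOp n i := by
  refine LinearMap.ext fun P => ?_
  simp [Lop, divVF_transVF, liftX, transVF, apply_ite, mulOp, ite_apply]

lemma Lop_dilVF (δ : ℝ) :
    Lop n δ (dilVF n) = xEulerOp n - eulerOp n + (δ * n) • 1 := by
  refine LinearMap.ext fun P => ?_
  simp [Lop, divVF_dilVF, liftX, dilVF, xEulerOp, eulerOp, xVar, pderiv_X, Pi.single_apply,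
    mulOp]
  rw [mul_smul, ← nsmul_eq_mul, ← Nat.cast_smul_eq_nsmul ℝ]

lemma Lop_eq_add_of_divVF_eq_C {Xf : PolyVF n} {c : ℝ} (h : divVF n Xf = C c) (δ δ' : ℝ) :
    Lop n δ' Xf = Lop n δ Xf + ((δ' - δ) * c) • 1 := by
  refine LinearMap.ext fun P => ?_
  simp only [Lop, h, liftX, rename_C, mulOp, LinearMap.add_apply, LinearMap.smul_apply,
    LinearMap.mulLeft_apply, Module.End.one_apply, ← smul_eq_C_mul]
  module

lemma map_Lop_comm_of_divVF_eq_C {A : Module.End ℝ (PolySym n)} {Xf : PolyVF n} {c : ℝ}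
    (h : divVF n Xf = C c) {δ : ℝ} {P : PolySym n} (hA : A (Lop n δ Xf P) = Lop n δ Xf (A P))
    (δ' : ℝ) : A (Lop n δ' Xf P) = Lop n δ' Xf (A P) := by
  simp [Lop_eq_add_of_divVF_eq_C h δ δ', hA]

lemma xEulerOp_map_of_dilation_invariant {A : Module.End ℝ (PolySym n)} {δ : ℝ} {k l : ℕ}
    {P : PolySym n} (hP : IsPHomog n P k) (hAP : IsPHomog n (A P) l)
    (h : A (Lop n δ (dilVF n) P) = Lop n δ (dilVF n) (A P)) :
    xEulerOp n (A P) = A (xEulerOp n P) - ((k : ℝ) - l) • A P := by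
  simp only [Lop_dilVF, LinearMap.add_apply, LinearMap.sub_apply, LinearMap.smul_apply,
    Module.End.one_apply, map_add, map_sub, map_smul, eulerOp_of_isPHomog hP,
    eulerOp_of_isPHomog hAP] at h
  linear_combination (norm := module) -h

/-- `(a, β, c)` indexes the operator `p^a ∂_x^β ∂_p^c`. -/
abbrev CoeffIndex (n : ℕ) := (Fin n →₀ ℕ) × (Fin n →₀ ℕ) × (Fin n →₀ ℕ)

def constCoeffDiffOp (n : ℕ) (coef : CoeffIndex n →₀ ℝ) : Module.End ℝ (PolySym n) :=
  coef.sum fun t c =>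
    c • (mulOp n (pMonomial n t.1) ∘ₗ derivMultiSymLinear n (sumElim t.2.1 t.2.2))

lemma constCoeffDiffOp_apply (coef : CoeffIndex n →₀ ℝ) (P : PolySym n) :
    constCoeffDiffOp n coef P =
      coef.sum fun t c => c • (pMonomial n t.1 * derivMultiSym n (sumElim t.2.1 t.2.2) P) := by
  simp [constCoeffDiffOp, Finsupp.sum, mulOp, derivMultiSymLinear_apply]

lemma constCoeffDiffOp_dxOp (coef : CoeffIndex n →₀ ℝ) (i : Fin n) (P : PolySym n) :
    constCoeffDiffOp n coef (dxOp n i P) = dxOp n i (constCoeffDiffOp n coef P) := by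
  simp only [constCoeffDiffOp_apply, Finsupp.sum, map_sum, map_smul]
  refine Finset.sum_congr rfl fun t _ => ?_
  rw [dxOp_apply, dxOp_apply, Derivation.leibniz, pderiv_inl_pMonomial, smul_zero,
    add_zero, pderiv_derivMultiSym, smul_eq_mul]

lemma xEulerOp_pMonomial_mul_derivMultiSym (a m b β c : Fin n →₀ ℕ) :
    xEulerOp n (pMonomial n a * derivMultiSym n (sumElim β c) (xpMonomial m b)) =
      ((m.degree : ℝ) - β.degree) •
        (pMonomial n a * derivMultiSym n (sumElim β c) (xpMonomial m b)) := by
  rw [xpMonomial, derivMultiSym_monomial, Finsupp.sumElim_tsub, one_mul, ← xpMonomial,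
    mul_smul_comm, pMonomial_mul_xpMonomial, map_smul, xEulerOp_xpMonomial, smul_comm]
  by_cases hβ : β ≤ m
  · rw [← Finsupp.degree_tsub_add_degree hβ, Nat.cast_add, add_sub_cancel_right]
  · have hle : ¬sumElim β c ≤ sumElim m b := fun h => hβ fun i => h (Sum.inl i)
    rw [Finsupp.prod_descFactorial_eq_zero_of_not_le hle, zero_smul, smul_zero, smul_zero]

lemma xEulerOp_constCoeffDiffOp_xpMonomial {coef : CoeffIndex n →₀ ℝ} {s : ℕ}
    (hs : ∀ t ∈ coef.support, t.2.1.degree = s) (m b : Fin n →₀ ℕ) :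
    xEulerOp n (constCoeffDiffOp n coef (xpMonomial m b)) =
      ((m.degree : ℝ) - s) • constCoeffDiffOp n coef (xpMonomial m b) := by
  simp only [constCoeffDiffOp_apply, Finsupp.sum, map_sum, map_smul, Finset.smul_sum]
  refine Finset.sum_congr rfl fun t ht => ?_
  rw [xEulerOp_pMonomial_mul_derivMultiSym, hs t ht, smul_comm]

lemma pMonomial_mul_derivMultiSym_xpMonomial {a m b β c : Fin n →₀ ℕ}
    (h : β.degree + c.degree = m.degree + b.degree) :
    pMonomial n a * derivMultiSym n (sumElim β c) (xpMonomial m b) =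
      if β = m ∧ c = b then (∏ v, ((sumElim m b v).factorial : ℝ)) • pMonomial n a else 0 := by
  have hinj : sumElim β c = sumElim m b ↔ β = m ∧ c = b := by
    simpa using (Finsupp.sumFinsuppEquivProdFinsupp (α := Fin n) (β := Fin n)
      (γ := ℕ)).symm.injective.eq_iff (a := (β, c)) (b := (m, b))
  rw [xpMonomial, derivMultiSym_monomial_of_degree_eq (by simpa [Finsupp.degree_sumElim] using h),
    apply_ite (pMonomial n a * ·), one_mul, mul_smul_comm, mul_one, mul_zero]
  exact if_congr hinj rfl rfl

def coeffIndices (n k l : ℕ) : Finset (CoeffIndex n) :=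
  multiIndices n l ×ˢ multiIndices n (k - l) ×ˢ multiIndices n k

lemma mem_coeffIndices {k l : ℕ} {t : CoeffIndex n} :
    t ∈ coeffIndices n k l ↔ t.1.degree = l ∧ t.2.1.degree = k - l ∧ t.2.2.degree = k := by
  simp only [coeffIndices, Finset.mem_product, mem_multiIndices]

/-- The divisor is the value `β! c!` of `∂_x^β ∂_p^c` on `x^β p^c`. -/
def invariantCoeff (A : Module.End ℝ (PolySym n)) (t : CoeffIndex n) : ℝ :=
  coeff (sumElim 0 t.1) (A (xpMonomial t.2.1 t.2.2)) /
    ∏ v, ((sumElim t.2.1 t.2.2 v).factorial : ℝ)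

def invariantCoeffs (k l : ℕ) (A : Module.End ℝ (PolySym n)) : CoeffIndex n →₀ ℝ :=
  Finsupp.onFinset (coeffIndices n k l)
    (fun t => if t ∈ coeffIndices n k l then invariantCoeff A t else 0)
    fun _ ht => by_contra fun h => ht (if_neg h)

lemma support_invariantCoeffs_subset (k l : ℕ) (A : Module.End ℝ (PolySym n)) :
    (invariantCoeffs k l A).support ⊆ coeffIndices n k l :=
  Finsupp.support_onFinset_subset

lemma invariantCoeffs_sum {M : Type*} [AddCommMonoid M] (k l : ℕ)
    (A : Module.End ℝ (PolySym n)) {g : CoeffIndex n → ℝ → M} (hg : ∀ t, g t 0 = 0) :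
    (invariantCoeffs k l A).sum g = ∑ t ∈ coeffIndices n k l, g t (invariantCoeff A t) := by
  rw [invariantCoeffs, Finsupp.onFinset_sum _ hg]
  exact Finset.sum_congr rfl fun t ht => by rw [if_pos ht]

lemma constCoeffDiffOp_invariantCoeffs_xpMonomial {k l : ℕ} {A : Module.End ℝ (PolySym n)}
    {m b : Fin n →₀ ℕ} (hm : m.degree = k - l) (hb : b.degree = k)
    (hAl : IsPHomog n (A (xpMonomial m b)) l) (hAx : xEulerOp n (A (xpMonomial m b)) = 0) :
    constCoeffDiffOp n (invariantCoeffs k l A) (xpMonomial m b) = A (xpMonomial m b) := by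
  rw [constCoeffDiffOp_apply, invariantCoeffs_sum, coeffIndices,
    Finset.sum_product, eq_sum_pMonomial_of_xEulerOp_eq_zero hAl hAx]
  swap
  · exact fun _ => zero_smul ℝ _
  refine Finset.sum_congr rfl fun a _ => ?_
  rw [Finset.sum_product, Finset.sum_eq_single_of_mem m (mem_multiIndices.mpr hm) ?_,
    Finset.sum_eq_single_of_mem b (mem_multiIndices.mpr hb) ?_]
  · have hK : ∏ v, ((sumElim m b v).factorial : ℝ) ≠ 0 :=
      Finset.prod_ne_zero_iff.mpr fun v _ => by exact_mod_cast (sumElim m b v).factorial_ne_zero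
    rw [pMonomial_mul_derivMultiSym_xpMonomial rfl, if_pos ⟨rfl, rfl⟩, smul_smul,
      invariantCoeff, div_mul_cancel₀ _ hK]
  · intro c hc hcb
    rw [pMonomial_mul_derivMultiSym_xpMonomial (by rw [mem_multiIndices.mp hc, hb]),
      if_neg fun h => hcb h.2, smul_zero]
  · intro β hβ hβm
    refine Finset.sum_eq_zero fun c hc => ?_
    rw [pMonomial_mul_derivMultiSym_xpMonomial
        (by rw [mem_multiIndices.mp hc, hb, mem_multiIndices.mp hβ, hm]),
      if_neg fun h => hβm h.1, smul_zero]

theorem eq_constCoeffDiffOp_invariantCoeffs {k l : ℕ} {A : Module.End ℝ (PolySym n)}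
    (hdeg : ∀ P, IsPHomog n P k → IsPHomog n (A P) l)
    (hdx : ∀ i P, IsPHomog n P k → A (dxOp n i P) = dxOp n i (A P))
    (hx : ∀ P, IsPHomog n P k →
      xEulerOp n (A P) = A (xEulerOp n P) - ((k - l : ℕ) : ℝ) • A P)
    {P : PolySym n} (hP : IsPHomog n P k) :
    A P = constCoeffDiffOp n (invariantCoeffs k l A) P := by
  have hxA : ∀ m b : Fin n →₀ ℕ, b.degree = k → xEulerOp n (A (xpMonomial m b)) =
      ((m.degree : ℝ) - (k - l : ℕ)) • A (xpMonomial m b) := fun m b hb => by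
    rw [hx _ (hb ▸ isPHomog_xpMonomial m b), xEulerOp_xpMonomial, map_smul, sub_smul]
  rw [← sub_eq_zero, ← LinearMap.sub_apply]
  refine map_eq_zero_of_isPHomog _ (map_xpMonomial_eq_zero (s := k - l) ?_ ?_ ?_) hP
  · intro i m b hb
    rw [LinearMap.sub_apply, LinearMap.sub_apply, map_sub,
      hdx i _ (hb ▸ isPHomog_xpMonomial m b), constCoeffDiffOp_dxOp]
  · intro m b hb
    have hs : ∀ t ∈ (invariantCoeffs k l A).support, t.2.1.degree = k - l := fun t ht =>
      (mem_coeffIndices.mp (support_invariantCoeffs_subset k l A ht)).2.1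
    rw [LinearMap.sub_apply, map_sub, hxA m b hb, xEulerOp_constCoeffDiffOp_xpMonomial hs,
      smul_sub]
  · intro m b hm hb
    rw [LinearMap.sub_apply, sub_eq_zero, constCoeffDiffOp_invariantCoeffs_xpMonomial hm hb
      (hdeg _ (hb ▸ isPHomog_xpMonomial m b)) (by rw [hxA m b hb, hm, sub_self, zero_smul])]

end AffineInvariant

open AffineInvariant

/-- Any operator `A` from weight-`δ` symbols homogeneous of degree `k` in `p`
to those of degree `l < k` commuting with the actions of the translations and of the dilation
is a differential operator with constant coefficients in the generators `p_i`, `∂_{x^i}`,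
`∂_{p_i}`, whose degree in `∂_x` equals its degree in `∂_p` minus its degree in `p` (and with
degree at most `k` in `∂_p`); hence the space of such invariant operators is
finite-dimensional and independent of `δ`. -/
theorem affine_invariant_operators_are_differential (n k l : ℕ) (hl : l < k) (δ : ℝ)
    (A : Module.End ℝ (PolySym n))
    (hdeg : ∀ P : PolySym n, IsPHomog n P k → IsPHomog n (A P) l)
    (hinv : ∀ Xf ∈ Set.range (transVF n) ∪ {dilVF n}, ∀ P : PolySym n, IsPHomog n P k →
      A (Lop n δ Xf P) = Lop n δ Xf (A P)) :
    (∃ coef : ((Fin n →₀ ℕ) × (Fin n →₀ ℕ) × (Fin n →₀ ℕ)) →₀ ℝ,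
      (∀ t ∈ coef.support,
        (t.1.sum fun _ e => e) + (t.2.1.sum fun _ e => e) = (t.2.2.sum fun _ e => e) ∧
        (t.2.2.sum fun _ e => e) ≤ k) ∧
      ∀ P : PolySym n, IsPHomog n P k →
        A P = coef.sum fun t cc => cc • (pMonomial n t.1 *
          derivMultiSym n (t.2.1.mapDomain Sum.inl + t.2.2.mapDomain Sum.inr) P)) ∧
    (∀ δ' : ℝ, ∀ Xf ∈ Set.range (transVF n) ∪ {dilVF n}, ∀ P : PolySym n, IsPHomog n P k →
      A (Lop n δ' Xf P) = Lop n δ' Xf (A P)) := by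
  have hdx : ∀ i P, IsPHomog n P k → A (dxOp n i P) = dxOp n i (A P) := fun i P hP => by
    simpa only [Lop_transVF] using hinv _ (Or.inl ⟨i, rfl⟩) P hP
  have hx : ∀ P, IsPHomog n P k →
      xEulerOp n (A P) = A (xEulerOp n P) - ((k - l : ℕ) : ℝ) • A P := fun P hP => by
    rw [Nat.cast_sub hl.le]
    exact xEulerOp_map_of_dilation_invariant hP (hdeg P hP) (hinv _ (Or.inr rfl) P hP)
  refine ⟨⟨invariantCoeffs k l A, fun t ht => ?_, fun P hP => ?_⟩, ?_⟩
  · obtain ⟨h₁, h₂, h₃⟩ := mem_coeffIndices.mp (support_invariantCoeffs_subset k l A ht)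
    change t.1.degree + t.2.1.degree = t.2.2.degree ∧ t.2.2.degree ≤ k
    omega
  · simpa only [constCoeffDiffOp_apply, Finsupp.sumElim_eq_add]
      using eq_constCoeffDiffOp_invariantCoeffs hdeg hdx hx hP
  · rintro δ' Xf (⟨i, rfl⟩ | rfl) P hP
    · exact map_Lop_comm_of_divVF_eq_C ((divVF_transVF i).trans C_0.symm)
        (hinv _ (Or.inl ⟨i, rfl⟩) P hP) δ'
    · exact map_Lop_comm_of_divVF_eq_C divVF_dilVF (hinv _ (Or.inr rfl) P hP) δ'
end
end
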